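/- arXiv:1208.1903 — 7 statements merged into one kernel-verified Lean document; each statement's English description precedes it below -/
import Mathlib

section
/- Let χ be the character on the additive group of n×n hermitian matrices over F_{q^2} defined by χ(h) = Σ_{w ∈ F_{q^2}^n} ε^{tr(w̄^T h w)}, where ε is a primitive p-th root of unity in ℂ and tr is the absolute trace from F_q to F_p. Then for any hermitian matrix h of rank k, χ(h) = (-1)^k q^{2n-k}. -/
open Matrix Finset

/-- The inverse of the canonical map `ZMod p → F` (well-defined on the prime subfield). -/
noncomputable def toZModp (p : ℕ) (F : Type) [Field F] [CharP F p] : F → ZMod p :=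
  Function.invFun (fun t : ZMod p => (ZMod.castHom (dvd_refl p) F t))

namespace HermitianCharAux

open Polynomial

open scoped Classical in
lemma card_filter_le_natDegree {F : Type} [Field F] [Fintype F] (P : Polynomial F) (hP : P ≠ 0) :
    (univ.filter fun x : F => P.eval x = 0).card ≤ P.natDegree := by
  have h1 : (univ.filter fun x : F => P.eval x = 0) ⊆ P.roots.toFinset := by
    intro x hx
    simp only [mem_filter, mem_univ, true_and] at hx
    simpa [Multiset.mem_toFinset, mem_roots, hP] using hx
  calc (univ.filter fun x : F => P.eval x = 0).card ≤ P.roots.toFinset.card :=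
        Finset.card_le_card h1
    _ ≤ Multiset.card P.roots := Multiset.toFinset_card_le _
    _ ≤ P.natDegree := P.card_roots'

section Aux
variable {F : Type} [Field F] [Fintype F] {p e q : ℕ} (hp : p.Prime) (he : 0 < e)
  (hq : q = p ^ e) [CharP F p] (hF : Fintype.card F = q ^ 2) {ε : ℂ} (hε : IsPrimitiveRoot ε p)

open scoped Classical

set_option linter.unusedSectionVars false

include hp he hq in
lemma two_le_q : 2 ≤ q := by
  subst hq
  calc 2 ≤ p := hp.two_le
    _ = p ^ 1 := (pow_one p).symm
    _ ≤ p ^ e := Nat.pow_le_pow_right hp.pos he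

include hF in
lemma pow_q_sq (x : F) : x ^ q ^ 2 = x := by
  rw [← hF]; exact FiniteField.pow_card x

include hF in
lemma pow_q_add_one_pow_q (hq0 : q ≠ 0) (x : F) : (x ^ (q + 1)) ^ q = x ^ (q + 1) := by
  rcases eq_or_ne x 0 with rfl | hx
  · rw [zero_pow (Nat.succ_ne_zero q), zero_pow hq0]
  · have h2 : x ^ (q ^ 2) = x := pow_q_sq hF x
    calc (x ^ (q + 1)) ^ q = x ^ (q * q) * x ^ q := by ring
      _ = x ^ (q ^ 2) * x ^ q := by rw [pow_two]
      _ = x * x ^ q := by rw [h2]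
      _ = x ^ (q + 1) := by ring

include hp he hq hF in
lemma norm_fiber_aux :
    ((univ.filter fun y : F => y ^ q = y ∧ y ≠ 0).card = q - 1) ∧
    (∀ y : F, y ^ q = y → y ≠ 0 →
      (univ.filter fun x : F => x ^ (q + 1) = y).card = q + 1) := by
  have hq2 := two_le_q hp he hq
  set Sstar := univ.filter fun y : F => y ^ q = y ∧ y ≠ 0 with hSstar
  set Fstar := univ.filter fun x : F => x ≠ 0 with hFstar
  set fib : F → ℕ := fun z => (Fstar.filter fun x => x ^ (q + 1) = z).card with hfib
  have hmaps : ∀ x ∈ Fstar, x ^ (q + 1) ∈ Sstar := by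
    intro x hx
    simp only [hFstar, mem_filter, mem_univ, true_and] at hx
    simp only [hSstar, mem_filter, mem_univ, true_and]
    exact ⟨pow_q_add_one_pow_q hF (by omega) x, pow_ne_zero _ hx⟩
  have hpart : ∑ z ∈ Sstar, fib z = Fstar.card :=
    (Finset.card_eq_sum_card_fiberwise hmaps).symm
  have hFstarcard : Fstar.card = q ^ 2 - 1 := by
    rw [hFstar, Finset.filter_ne', Finset.card_erase_of_mem (mem_univ 0), Finset.card_univ, hF]
  have hfible : ∀ z : F, z ≠ 0 → fib z ≤ q + 1 := by
    intro z hz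
    have hsub : Fstar.filter (fun x => x ^ (q + 1) = z)
        ⊆ univ.filter fun x : F => (X ^ (q + 1) - C z).eval x = 0 := by
      intro x hx
      simp only [mem_filter, mem_univ, true_and] at hx ⊢
      simp [hx.2, sub_eq_zero]
    refine le_trans (Finset.card_le_card hsub) ?_
    refine le_trans (card_filter_le_natDegree _ ?_) ?_
    · intro habs
      have h0 := congrArg (eval 0) habs
      simp [zero_pow (Nat.succ_ne_zero q), hz] at h0
    · exact le_trans (natDegree_sub_le _ _) (by simp)
  have hScard : Sstar.card ≤ q - 1 := by
    have hsub : Sstar ⊆ univ.filter fun z : F => (X ^ (q - 1) - C 1 : Polynomial F).eval z = 0 := by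
      intro z hz
      simp only [hSstar, mem_filter, mem_univ, true_and] at hz ⊢
      have h1 : z * z ^ (q - 1) = z * 1 := by
        rw [mul_one, ← pow_succ']
        have : q - 1 + 1 = q := by omega
        rw [this]; exact hz.1
      simp [sub_eq_zero, mul_left_cancel₀ hz.2 h1]
    refine le_trans (Finset.card_le_card hsub) ?_
    refine le_trans (card_filter_le_natDegree _ ?_) ?_
    · intro habs
      have h0 := congrArg (eval 0) habs
      simp [zero_pow (by omega : q - 1 ≠ 0)] at h0
    · exact le_trans (natDegree_sub_le _ _) (by simp)
  have key : ∀ z ∈ Sstar, fib z = q + 1 := by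
    have hsum : ∑ z ∈ Sstar, ((q : ℤ) + 1 - fib z) = Sstar.card * (q + 1) - (q ^ 2 - 1) := by
      push_cast
      rw [Finset.sum_sub_distrib, Finset.sum_const, nsmul_eq_mul]
      have : ((∑ z ∈ Sstar, (fib z : ℤ))) = ((q:ℤ) ^ 2 - 1) := by
        rw [← Nat.cast_sum, hpart, hFstarcard,
          Nat.cast_sub (by nlinarith : 1 ≤ q ^ 2), Nat.cast_pow, Nat.cast_one]
      rw [this]; try ring
    have hle : (Sstar.card : ℤ) * (q + 1) - (q ^ 2 - 1) ≤ 0 := by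
      have h1 : (Sstar.card : ℤ) ≤ (q : ℤ) - 1 := by
        have := hScard; omega
      nlinarith [h1]
    have hnonneg : ∀ z ∈ Sstar, (0 : ℤ) ≤ (q : ℤ) + 1 - fib z := by
      intro z hz
      simp only [hSstar, mem_filter, mem_univ, true_and] at hz
      have := hfible z hz.2; omega
    have hzero : ∑ z ∈ Sstar, ((q : ℤ) + 1 - fib z) = 0 :=
      le_antisymm (hsum ▸ hle) (Finset.sum_nonneg hnonneg)
    intro z hz
    have := (Finset.sum_eq_zero_iff_of_nonneg hnonneg).mp hzero z hz
    omega
  constructor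
  · have hsumval : (Sstar.card : ℤ) * (q + 1) = (q:ℤ) ^ 2 - 1 := by
      have : ∑ z ∈ Sstar, (fib z : ℤ) = Sstar.card * (q + 1) := by
        rw [Finset.sum_congr rfl (fun z hz => by rw [key z hz]), Finset.sum_const,
          nsmul_eq_mul]; push_cast; ring
      rw [← this, ← Nat.cast_sum, hpart, hFstarcard,
        Nat.cast_sub (by nlinarith : 1 ≤ q ^ 2), Nat.cast_pow, Nat.cast_one]
    have h5 : ((Sstar.card : ℤ) - ((q:ℤ) - 1)) * ((q:ℤ)+1) = 0 := by ring_nf; linarith [hsumval]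
    rcases mul_eq_zero.mp h5 with h | h
    · omega
    · omega
  · intro y hy1 hy2
    have hy : y ∈ Sstar := by simp [hSstar, hy1, hy2]
    have h1 := key y hy
    have heq2 : (univ.filter fun x : F => x ^ (q + 1) = y)
        = Fstar.filter fun x => x ^ (q + 1) = y := by
      apply Finset.ext; intro x
      simp only [hFstar, mem_filter, mem_univ, true_and]
      constructor
      · intro hx
        have hx0 : x ≠ 0 := by
          intro h0
          rw [h0, zero_pow (by omega : q + 1 ≠ 0)] at hx
          exact hy2 hx.symm
        exact ⟨hx0, hx⟩
      · exact fun hx => hx.2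
    rw [heq2]; exact h1

include hp he hq hF in
lemma S_card : (univ.filter fun y : F => y ^ q = y).card = q := by
  have h1 := (norm_fiber_aux hp he hq hF).1
  have hq2 : 2 ≤ q := two_le_q hp he hq
  have heq : (univ.filter fun y : F => y ^ q = y) =
      insert 0 (univ.filter fun y : F => y ^ q = y ∧ y ≠ 0) := by
    apply Finset.ext; intro y
    simp only [mem_filter, mem_univ, true_and, mem_insert]
    constructor
    · intro hy
      rcases eq_or_ne y 0 with rfl | h; · exact Or.inl rfl
      · exact Or.inr ⟨hy, h⟩
    · rintro (rfl | ⟨hy, _⟩)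
      · exact zero_pow (by omega)
      · exact hy
  rw [heq, Finset.card_insert_of_notMem (by simp), h1]
  omega

variable (p e) in
/-- The trace-like map `t ↦ ∑ t^{p^i}`. -/
noncomputable def Tr : F → F := fun t => ∑ i ∈ Finset.range e, t ^ p ^ i

include hp in
lemma Tr_add (s t : F) : Tr p e (s + t) = Tr p e s + Tr p e t := by
  haveI := Fact.mk hp
  simp only [Tr, add_pow_char_pow]
  rw [Finset.sum_add_distrib]

include hp hq in
lemma Tr_pow_p (t : F) (ht : t ^ q = t) : (Tr p e t) ^ p = Tr p e t := by
  haveI := Fact.mk hp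
  rw [Tr, sum_pow_char]
  have h1 : ∀ i ∈ Finset.range e, (t ^ p ^ i) ^ p = t ^ p ^ (i + 1) := by
    intro i _
    rw [← pow_mul, ← pow_succ]
  rw [Finset.sum_congr rfl h1]
  have h2 : ∑ i ∈ Finset.range (e+1), t ^ p ^ i
      = (∑ i ∈ Finset.range e, t ^ p ^ (i+1)) + t ^ p ^ 0 := Finset.sum_range_succ' _ _
  have h3 : ∑ i ∈ Finset.range (e+1), t ^ p ^ i
      = (∑ i ∈ Finset.range e, t ^ p ^ i) + t ^ p ^ e := Finset.sum_range_succ _ _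
  have h4 : t ^ p ^ e = t := by rw [← hq]; exact ht
  rw [h4] at h3
  rw [pow_zero, pow_one] at h2
  have h5 := h2.symm.trans h3
  calc ∑ i ∈ Finset.range e, t ^ p ^ (i+1)
      = ((∑ i ∈ Finset.range e, t ^ p ^ (i+1)) + t) - t := by ring
    _ = ((∑ i ∈ Finset.range e, t ^ p ^ i) + t) - t := by rw [h5]
    _ = ∑ i ∈ Finset.range e, t ^ p ^ i := by ring

include hp in
lemma castHom_inj : Function.Injective (fun t : ZMod p => (ZMod.castHom (dvd_refl p) F) t) := by
  haveI := Fact.mk hp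
  exact (ZMod.castHom (dvd_refl p) F).injective

include hp in
lemma mem_primeField (t : F) (ht : t ^ p = t) :
    ∃ z : ZMod p, (ZMod.castHom (dvd_refl p) F) z = t := by
  haveI := Fact.mk hp
  set img : Finset F := Finset.univ.image (fun z : ZMod p => (ZMod.castHom (dvd_refl p) F) z)
  have himg : img.card = p := by
    rw [Finset.card_image_of_injective _ (castHom_inj hp), Finset.card_univ, ZMod.card]
  have hsub : img ⊆ univ.filter fun x : F => x ^ p = x := by
    intro x hx
    simp only [img, Finset.mem_image] at hx
    obtain ⟨z, _, rfl⟩ := hx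
    simp only [mem_filter, mem_univ, true_and]
    rw [← map_pow, ZMod.pow_card]
  have hcard : (univ.filter fun x : F => x ^ p = x).card ≤ p := by
    have hsub2 : (univ.filter fun x : F => x ^ p = x)
        ⊆ univ.filter fun x : F => (X ^ p - X : Polynomial F).eval x = 0 := by
      intro x hx
      simp only [mem_filter, mem_univ, true_and] at hx ⊢
      simp [hx, sub_eq_zero]
    refine le_trans (Finset.card_le_card hsub2) ?_
    refine le_trans (card_filter_le_natDegree _ ?_) ?_
    · intro habs
      have h0 := congrArg (fun P => coeff P 1) habs
      have hp1 : p ≠ 1 := hp.ne_one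
      simp [coeff_X_pow, hp1, Ne.symm hp1] at h0
    · exact le_trans (natDegree_sub_le _ _) (by simp [hp.one_lt.le])
  have heq : img = univ.filter fun x : F => x ^ p = x :=
    Finset.eq_of_subset_of_card_le hsub (by omega)
  have : t ∈ img := by rw [heq]; simp [ht]
  simpa [img, Finset.mem_image] using this

include hp in
lemma toZModp_spec (t : F) (ht : t ^ p = t) :
    (ZMod.castHom (dvd_refl p) F) (toZModp p F t) = t := by
  obtain ⟨z, hz⟩ := mem_primeField hp t ht
  rw [toZModp, ← hz, Function.leftInverse_invFun (castHom_inj hp) z]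

variable (p e ε) in
/-- The additive character. -/
noncomputable def psi : F → ℂ := fun t => ε ^ (toZModp p F (Tr p e t)).val

include hp in
lemma toZModp_zero : toZModp p F 0 = 0 := by
  have h := toZModp_spec hp (0 : F) (by haveI := Fact.mk hp; simp [hp.pos.ne'])
  have h2 : (ZMod.castHom (dvd_refl p) F) (0 : ZMod p) = 0 := map_zero _
  exact castHom_inj hp (h.trans h2.symm)

include hp he in
lemma Tr_zero : Tr p e (0 : F) = 0 := by
  simp only [Tr]
  rw [Finset.sum_eq_zero]
  intro i _
  exact zero_pow (pow_ne_zero i hp.pos.ne')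

include hp he in
lemma psi_zero : psi p e ε (0 : F) = 1 := by
  rw [psi, Tr_zero hp he, toZModp_zero hp]
  simp [ZMod.val_zero]

include hε hp in
lemma eps_pow_mod (m : ℕ) : ε ^ m = ε ^ (m % p) := by
  conv_lhs => rw [← Nat.mod_add_div m p, pow_add, pow_mul, hε.pow_eq_one, one_pow, mul_one]

include hp hq hε in
lemma psi_add (s t : F) (hs : s ^ q = s) (ht : t ^ q = t) :
    psi p e ε (s + t) = psi p e ε s * psi p e ε t := by
  haveI := Fact.mk hp
  have hTs := Tr_pow_p hp hq s hs
  have hTt := Tr_pow_p hp hq t ht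
  have hadd : toZModp p F (Tr p e (s + t)) = toZModp p F (Tr p e s) + toZModp p F (Tr p e t) := by
    apply castHom_inj (F := F) hp
    show (ZMod.castHom (dvd_refl p) F) _ = (ZMod.castHom (dvd_refl p) F) _
    have hTst : (Tr p e (s + t)) ^ p = Tr p e (s + t) := by
      rw [Tr_add hp, add_pow_char, hTs, hTt]
    rw [map_add, toZModp_spec hp _ hTs, toZModp_spec hp _ hTt,
      toZModp_spec hp _ hTst, Tr_add hp]
  rw [psi, psi, psi, hadd, ← pow_add]
  haveI : NeZero p := ⟨hp.pos.ne'⟩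
  rw [ZMod.val_add, ← eps_pow_mod hp hε]

include hp he hq hε in
lemma psi_sum {ι : Type*} (s : Finset ι) (g : ι → F) (hg : ∀ i ∈ s, (g i) ^ q = g i) :
    psi p e ε (∑ i ∈ s, g i) = ∏ i ∈ s, psi p e ε (g i) := by
  classical
  induction s using Finset.induction_on with
  | empty => simpa using psi_zero hp he (ε := ε)
  | @insert a s hni ih =>
    rw [Finset.sum_insert hni, Finset.prod_insert hni]
    have hsum : (∑ i ∈ s, g i) ^ q = ∑ i ∈ s, g i := by
      haveI := Fact.mk hp
      rw [hq, sum_pow_char_pow]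
      exact Finset.sum_congr rfl fun i hi => by
        rw [← hq]; exact hg i (Finset.mem_insert_of_mem hi)
    rw [psi_add hp hq hε _ _ (hg a (Finset.mem_insert_self a s)) hsum,
      ih fun i hi => hg i (Finset.mem_insert_of_mem hi)]

-- membership closure lemmas for S
include hp hq in
lemma S_add {s t : F} (hs : s ^ q = s) (ht : t ^ q = t) : (s + t) ^ q = s + t := by
  haveI := Fact.mk hp
  rw [hq, add_pow_char_pow, ← hq, hs, ht]

include hp hq in
lemma S_neg {t : F} (ht : t ^ q = t) : (-t) ^ q = -t := by
  haveI := Fact.mk hp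
  have : (-t) ^ q = (-1) ^ q * t ^ q := by rw [← neg_one_mul, mul_pow]
  rw [this, ht, hq, neg_one_pow_char_pow]
  ring

include hp hq in
lemma S_mul {s t : F} (hs : s ^ q = s) (ht : t ^ q = t) : (s * t) ^ q = s * t := by
  rw [mul_pow, hs, ht]

include hp he hq hε in
lemma psi_S_nontrivial (hF' : Fintype.card F = q ^ 2) :
    ∃ y : F, y ^ q = y ∧ psi p e ε y ≠ 1 := by
  haveI := Fact.mk hp
  -- Tr is not identically zero on S
  have hTr : ∃ y : F, y ^ q = y ∧ Tr p e y ≠ 0 := by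
    by_contra hcon
    push_neg at hcon
    set P : Polynomial F := ∑ i ∈ Finset.range e, X ^ p ^ i with hP
    have hPne : P ≠ 0 := by
      intro habs
      have hc := congrArg (fun P => coeff P (p ^ (e - 1))) habs
      simp only [hP, finset_sum_coeff, coeff_X_pow, coeff_zero] at hc
      rw [Finset.sum_congr rfl (fun i (hi : i ∈ Finset.range e) => by
        rw [show (if p ^ (e-1) = p ^ i then (1:F) else 0)
            = if i = e - 1 then (1:F) else 0 from by
          by_cases h : i = e - 1
          · simp [h]
          · have : p ^ (e-1) ≠ p ^ i := fun hh =>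
              h (Nat.pow_right_injective hp.two_le hh).symm
            simp [h, this]])] at hc
      rw [Finset.sum_ite_eq' (Finset.range e) (e-1)] at hc
      simp [Nat.sub_lt he Nat.one_pos] at hc
    have hdeg : P.natDegree ≤ p ^ (e - 1) := by
      refine le_trans (natDegree_sum_le _ _) ?_
      rw [Finset.fold_max_le]
      constructor
      · omega
      · intro i hi
        simp only [Function.comp]
        rw [natDegree_X_pow]
        exact Nat.pow_le_pow_right hp.pos (by simp at hi; omega)
    have hsub : (univ.filter fun y : F => y ^ q = y)
        ⊆ univ.filter fun y : F => P.eval y = 0 := by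
      intro y hy
      simp only [mem_filter, mem_univ, true_and] at hy ⊢
      have := hcon y hy
      simpa [hP, Tr, eval_finset_sum] using this
    have hcard := Finset.card_le_card hsub
    rw [S_card hp he hq hF'] at hcard
    have := le_trans hcard (le_trans (card_filter_le_natDegree _ hPne) hdeg)
    have hlt : p ^ (e - 1) < p ^ e := Nat.pow_lt_pow_right hp.one_lt (by omega)
    omega
  obtain ⟨y, hy, hTy⟩ := hTr
  refine ⟨y, hy, ?_⟩
  have hz : toZModp p F (Tr p e y) ≠ 0 := by
    intro habs
    apply hTy
    have := toZModp_spec hp (Tr p e y) (Tr_pow_p hp hq y hy)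
    rw [habs, map_zero] at this
    exact this.symm
  rw [psi]
  have hval : 0 < (toZModp p F (Tr p e y)).val := by
    rcases Nat.eq_zero_or_pos (toZModp p F (Tr p e y)).val with h | h
    · exact absurd ((ZMod.val_eq_zero _).mp h) hz
    · exact h
  have hval2 : (toZModp p F (Tr p e y)).val < p := ZMod.val_lt _
  exact hε.pow_ne_one_of_pos_of_lt hval.ne' hval2

include hp he hq hε in
lemma sum_psi_S (hF' : Fintype.card F = q ^ 2) :
    ∑ y ∈ univ.filter (fun y : F => y ^ q = y), psi p e ε y = 0 := by
  obtain ⟨y₀, hy₀, hψ⟩ := psi_S_nontrivial hp he hq hε hF'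
  set S := univ.filter (fun y : F => y ^ q = y) with hS
  have htrans : ∑ y ∈ S, psi p e ε (y + y₀) = ∑ y ∈ S, psi p e ε y := by
    apply Finset.sum_nbij' (fun y => y + y₀) (fun y => y + (-y₀))
    · intro a ha
      simp only [hS, mem_filter, mem_univ, true_and] at ha ⊢
      exact S_add hp hq ha hy₀
    · intro a ha
      simp only [hS, mem_filter, mem_univ, true_and] at ha ⊢
      exact S_add hp hq ha (S_neg hp hq hy₀)
    · intro a _; ring
    · intro a _; ring
    · intro a _; rfl
  have hmul : ∀ y ∈ S, psi p e ε (y + y₀) = psi p e ε y * psi p e ε y₀ := by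
    intro y hy
    simp only [hS, mem_filter, mem_univ, true_and] at hy
    exact psi_add hp hq hε y y₀ hy hy₀
  rw [Finset.sum_congr rfl hmul, ← Finset.sum_mul] at htrans
  by_contra hne
  exact hψ (mul_left_cancel₀ hne (htrans.trans (mul_one _).symm))

include hp he hq hε in
lemma sum_psi_S_scaled (hF' : Fintype.card F = q ^ 2) (a : F) (ha : a ^ q = a) (ha0 : a ≠ 0) :
    ∑ y ∈ univ.filter (fun y : F => y ^ q = y), psi p e ε (a * y) = 0 := by
  set S := univ.filter (fun y : F => y ^ q = y) with hS
  have hbij : ∑ y ∈ S, psi p e ε (a * y) = ∑ y ∈ S, psi p e ε y := by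
    apply Finset.sum_nbij' (fun y => a * y) (fun y => a⁻¹ * y)
    · intro x hx
      simp only [hS, mem_filter, mem_univ, true_and] at hx ⊢
      exact S_mul hp hq ha hx
    · intro x hx
      simp only [hS, mem_filter, mem_univ, true_and] at hx ⊢
      refine S_mul hp hq ?_ hx
      rw [inv_pow, ha]
    · intro x _; field_simp
    · intro x _; field_simp
    · intro x _; rfl
  rw [hbij]
  exact sum_psi_S hp he hq hε hF'

include hp he hq hF hε in
lemma gauss_one (a : F) (ha : a ^ q = a) (ha0 : a ≠ 0) :
    ∑ x : F, psi p e ε (a * x ^ (q + 1)) = -(q : ℂ) := by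
  have hq2 := two_le_q hp he hq
  set S := univ.filter (fun y : F => y ^ q = y) with hS
  have hmaps : ∀ x ∈ (univ : Finset F), x ^ (q + 1) ∈ S := by
    intro x _
    simp only [hS, mem_filter, mem_univ, true_and]
    exact pow_q_add_one_pow_q hF (by omega) x
  have hfib := Finset.sum_fiberwise_of_maps_to hmaps (fun x => psi p e ε (a * x ^ (q + 1)))
  rw [← hfib]
  have hinner : ∀ y ∈ S, ∑ x ∈ univ.filter (fun x : F => x ^ (q+1) = y),
      psi p e ε (a * x ^ (q + 1))
      = ((univ.filter (fun x : F => x ^ (q+1) = y)).card : ℂ) * psi p e ε (a * y) := by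
    intro y _
    rw [Finset.sum_congr rfl (fun x hx => by
      simp only [mem_filter, mem_univ, true_and] at hx
      rw [hx]), Finset.sum_const, nsmul_eq_mul]
  rw [Finset.sum_congr rfl hinner]
  have h0S : (0 : F) ∈ S := by simp [hS, zero_pow (by omega : q ≠ 0)]
  rw [← Finset.sum_erase_add _ _ h0S]
  have hfib0 : (univ.filter (fun x : F => x ^ (q+1) = (0:F))) = {0} := by
    apply Finset.ext; intro x
    simp only [mem_filter, mem_univ, true_and, Finset.mem_singleton,
      pow_eq_zero_iff (by omega : q + 1 ≠ 0)]
  have hterm0 : ((univ.filter (fun x : F => x ^ (q+1) = (0:F))).card : ℂ)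
      * psi p e ε (a * 0) = 1 := by
    rw [hfib0, Finset.card_singleton, mul_zero, psi_zero hp he]
    simp
  rw [hterm0]
  have hfiby : ∀ y ∈ S.erase 0, ((univ.filter (fun x : F => x ^ (q+1) = y)).card : ℂ)
      * psi p e ε (a * y) = ((q : ℂ) + 1) * psi p e ε (a * y) := by
    intro y hy
    obtain ⟨hy0, hyS⟩ := Finset.mem_erase.mp hy
    simp only [hS, mem_filter, mem_univ, true_and] at hyS
    rw [(norm_fiber_aux hp he hq hF).2 y hyS hy0]
    push_cast; ring
  rw [Finset.sum_congr rfl hfiby, ← Finset.mul_sum]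
  have hsum0 : ∑ y ∈ S.erase 0, psi p e ε (a * y) = -1 := by
    have h1 : (∑ y ∈ S.erase 0, psi p e ε (a * y)) + psi p e ε (a * 0)
        = ∑ y ∈ S, psi p e ε (a * y) := Finset.sum_erase_add _ _ h0S
    rw [sum_psi_S_scaled hp he hq hε hF a ha ha0] at h1
    rw [mul_zero, psi_zero hp he] at h1
    linear_combination h1
  rw [hsum0]
  ring

end Aux


section Diag
variable {F : Type} [Field F] [Fintype F] {p e q : ℕ} (hp : p.Prime) (he : 0 < e)
  (hq : q = p ^ e) [CharP F p] (hF : Fintype.card F = q ^ 2)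
  {n : ℕ} (h : Matrix (Fin n) (Fin n) F) (hherm : ∀ i j, h i j = h j i ^ q)

open scoped Classical

set_option linter.unusedSectionVars false

variable (q) in
/-- The sesquilinear form attached to `h`. -/
noncomputable def B (h : Matrix (Fin n) (Fin n) F) : (Fin n → F) → (Fin n → F) → F :=
  fun u w => ∑ i, ∑ j, u i ^ q * h i j * w j

lemma B_dot (u w : Fin n → F) :
    dotProduct (fun j => (u j) ^ q) (h.mulVec w) = B q h u w := by
  simp only [B, dotProduct, mulVec, Finset.mul_sum]
  exact Finset.sum_congr rfl fun i _ => Finset.sum_congr rfl fun j _ => by ring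

include hp hq in
lemma B_add_left (u v w : Fin n → F) : B q h (u + v) w = B q h u w + B q h v w := by
  haveI := Fact.mk hp
  subst hq
  simp only [B, Pi.add_apply, add_pow_char_pow, add_mul, Finset.sum_add_distrib]

lemma B_add_right (u v w : Fin n → F) : B q h u (v + w) = B q h u v + B q h u w := by
  simp only [B, Pi.add_apply, mul_add, Finset.sum_add_distrib]

lemma B_smul_left (c : F) (u w : Fin n → F) : B q h (c • u) w = c ^ q * B q h u w := by
  simp only [B, Pi.smul_apply, smul_eq_mul, mul_pow, Finset.mul_sum]
  exact Finset.sum_congr rfl fun i _ => Finset.sum_congr rfl fun j _ => by ring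

lemma B_smul_right (c : F) (u w : Fin n → F) : B q h u (c • w) = c * B q h u w := by
  simp only [B, Pi.smul_apply, smul_eq_mul, Finset.mul_sum]
  exact Finset.sum_congr rfl fun i _ => Finset.sum_congr rfl fun j _ => by ring

include hp he hq in
lemma B_zero_left (w : Fin n → F) : B q h 0 w = 0 := by
  have hq0 : q ≠ 0 := by have := two_le_q hp he hq; omega
  simp only [B, Pi.zero_apply, zero_pow hq0, zero_mul, Finset.sum_const_zero]

lemma B_zero_right (u : Fin n → F) : B q h u 0 = 0 := by
  simp only [B, Pi.zero_apply, mul_zero, Finset.sum_const_zero]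

include hp hq hF hherm in
lemma B_conj (u w : Fin n → F) : B q h w u = (B q h u w) ^ q := by
  haveI := Fact.mk hp
  have hφ : ∀ x : F, x ^ q = iterateFrobenius F p e x := fun x => by
    rw [iterateFrobenius_def, hq]
  rw [hφ (B q h u w)]
  show (∑ i, ∑ j, w i ^ q * h i j * u j)
      = iterateFrobenius F p e (∑ i, ∑ j, u i ^ q * h i j * w j)
  rw [map_sum, Finset.sum_comm]
  refine Finset.sum_congr rfl fun a _ => ?_
  rw [map_sum]
  refine Finset.sum_congr rfl fun b _ => ?_
  rw [_root_.map_mul, _root_.map_mul, ← hφ, ← hφ, ← hφ]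
  have h1 : (u a ^ q) ^ q = u a := by
    rw [← pow_mul, ← pow_two]; exact pow_q_sq hF (u a)
  have h2 : (h a b) ^ q = h b a := (hherm b a).symm
  rw [h1, h2]
  ring

include hp he hq hF in
lemma exists_trace_ne_zero : ∃ t : F, t + t ^ q ≠ 0 := by
  have hq2 := two_le_q hp he hq
  by_contra hcon
  push_neg at hcon
  have hsub : (univ : Finset F) ⊆
      univ.filter fun x : F => (Polynomial.X + Polynomial.X ^ q : Polynomial F).eval x = 0 := by
    intro x _
    simp only [mem_filter, mem_univ, true_and, Polynomial.eval_add, Polynomial.eval_pow,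
      Polynomial.eval_X]
    exact hcon x
  have hne : (Polynomial.X + Polynomial.X ^ q : Polynomial F) ≠ 0 := by
    intro habs
    have h0 : ((Polynomial.X + Polynomial.X ^ q : Polynomial F)).coeff 1 = 0 := by
      rw [habs]; simp
    rw [Polynomial.coeff_add, Polynomial.coeff_X_one, Polynomial.coeff_X_pow,
      if_neg (by omega : ¬ (1 = q))] at h0
    simp at h0
  have hcard := Finset.card_le_card hsub
  rw [Finset.card_univ, hF] at hcard
  have hd := card_filter_le_natDegree _ hne
  have hdeg : (Polynomial.X + Polynomial.X ^ q : Polynomial F).natDegree ≤ q :=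
    le_trans (Polynomial.natDegree_add_le _ _) (by simp; omega)
  nlinarith

include hp he hq hF hherm in
lemma exists_nonisotropic (M : Submodule F (Fin n → F)) (x y : Fin n → F)
    (hx : x ∈ M) (hy : y ∈ M) (hBxy : B q h x y ≠ 0) :
    ∃ v ∈ M, B q h v v ≠ 0 := by
  by_cases hxx : B q h x x ≠ 0
  · exact ⟨x, hx, hxx⟩
  by_cases hyy : B q h y y ≠ 0
  · exact ⟨y, hy, hyy⟩
  push_neg at hxx hyy
  obtain ⟨t, ht⟩ := exists_trace_ne_zero hp he hq hF
  set lam := t / B q h x y with hlam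
  refine ⟨x + lam • y, M.add_mem hx (M.smul_mem lam hy), ?_⟩
  have hyx : B q h y x = (B q h x y) ^ q := B_conj hp hq hF h hherm x y
  have h1 : lam * B q h x y = t := div_mul_cancel₀ t hBxy
  have h2 : lam ^ q * (B q h x y) ^ q = t ^ q := by rw [← mul_pow, h1]
  have hexp : B q h (x + lam • y) (x + lam • y) = t + t ^ q := by
    simp only [B_add_left hp hq h, B_add_right h, B_smul_left h, B_smul_right h,
      hxx, hyy, hyx]
    linear_combination h1 + h2
  rw [hexp]
  exact ht

variable (q) in
/-- The linear functional `w ↦ B v w`. -/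
noncomputable def Bfun (h : Matrix (Fin n) (Fin n) F) (v : Fin n → F) :
    (Fin n → F) →ₗ[F] F where
  toFun w := B q h v w
  map_add' x y := B_add_right h v x y
  map_smul' c x := by simp [B_smul_right h c v x]

include hp he hq in
lemma B_sum_left {ι : Type*} (s : Finset ι) (u : ι → (Fin n → F)) (w : Fin n → F) :
    B q h (∑ i ∈ s, u i) w = ∑ i ∈ s, B q h (u i) w := by
  classical
  induction s using Finset.induction_on with
  | empty => simp only [Finset.sum_empty]; exact B_zero_left hp he hq h w
  | @insert a s ha ih =>
    rw [Finset.sum_insert ha, Finset.sum_insert ha, B_add_left hp hq h, ih]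

lemma B_sum_right {ι : Type*} (s : Finset ι) (u : Fin n → F) (w : ι → (Fin n → F)) :
    B q h u (∑ i ∈ s, w i) = ∑ i ∈ s, B q h u (w i) := by
  classical
  induction s using Finset.induction_on with
  | empty => simp only [Finset.sum_empty]; exact B_zero_right h u
  | @insert a s ha ih =>
    rw [Finset.sum_insert ha, Finset.sum_insert ha, B_add_right h, ih]

include hp he hq hF hherm in
lemma diag_ind : ∀ (m : ℕ) (c : Fin m → (Fin n → F)),
    ∃ b : Fin m → (Fin n → F),
      Submodule.span F (Set.range b) = Submodule.span F (Set.range c) ∧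
      ∀ i j, i ≠ j → B q h (b i) (b j) = 0 := by
  intro m
  induction m with
  | zero => exact fun c => ⟨c, rfl, fun i => i.elim0⟩
  | succ m ih =>
    intro c
    by_cases hall : ∀ x ∈ Submodule.span F (Set.range c),
        ∀ y ∈ Submodule.span F (Set.range c), B q h x y = 0
    · exact ⟨c, rfl, fun i j _ => hall _ (Submodule.subset_span (Set.mem_range_self i)) _
        (Submodule.subset_span (Set.mem_range_self j))⟩
    · push_neg at hall
      obtain ⟨x, hx, y, hy, hBxy⟩ := hall
      obtain ⟨v, hv, hvv⟩ := exists_nonisotropic hp he hq hF h hherm _ x y hx hy hBxy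
      set f := Bfun q h v with hfdef
      have hfv : f v = B q h v v := rfl
      set W := LinearMap.ker f ⊓ Submodule.span F (Set.range c) with hWdef
      have hvW : v ∉ W := by
        intro hmem
        rw [hWdef, Submodule.mem_inf, LinearMap.mem_ker] at hmem
        exact hvv (hfv ▸ hmem.1)
      have hWlt : W < Submodule.span F (Set.range c) :=
        lt_of_le_of_ne inf_le_right (fun habs => hvW (by rw [habs]; exact hv))
      have hfr : Module.finrank F W < Module.finrank F (Submodule.span F (Set.range c)) :=
        Submodule.finrank_lt_finrank_of_lt hWlt
      have hsc : Module.finrank F (Submodule.span F (Set.range c)) ≤ m + 1 := by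
        have := finrank_range_le_card (R := F) c
        simpa [Set.finrank] using this
      have hWle : Module.finrank F ↥W ≤ m := by omega
      set d := Module.finrank F ↥W with hd
      set bW := Module.finBasis F ↥W with hbW
      set c' : Fin m → (Fin n → F) :=
        fun i => if hi : (i : ℕ) < d then (bW ⟨i, hi⟩ : Fin n → F) else 0 with hc'
      have hspanc' : Submodule.span F (Set.range c') = W := by
        apply le_antisymm
        · rw [Submodule.span_le]
          rintro _ ⟨i, rfl⟩
          by_cases hi : (i : ℕ) < d
          · simp only [hc', dif_pos hi]; exact (bW ⟨(i : ℕ), hi⟩).2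
          · simp only [hc', dif_neg hi]; exact W.zero_mem
        · intro z hz
          have h1 : (⟨z, hz⟩ : W) ∈ (⊤ : Submodule F W) := trivial
          rw [← bW.span_eq] at h1
          have h2 : z ∈ Submodule.map W.subtype (Submodule.span F (Set.range ⇑bW)) :=
            ⟨⟨z, hz⟩, h1, rfl⟩
          rw [Submodule.map_span] at h2
          refine Submodule.span_mono ?_ h2
          rintro _ ⟨_, ⟨j, rfl⟩, rfl⟩
          refine ⟨⟨(j : ℕ), lt_of_lt_of_le j.2 hWle⟩, ?_⟩
          simp only [hc', dif_pos (show ((⟨(j : ℕ), lt_of_lt_of_le j.2 hWle⟩ : Fin m) : ℕ) < d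
            from j.2)]
          rfl
      obtain ⟨b', hspanb', horth⟩ := ih c'
      have hb'W : ∀ i, b' i ∈ W := by
        intro i
        have : b' i ∈ Submodule.span F (Set.range b') :=
          Submodule.subset_span (Set.mem_range_self i)
        rwa [hspanb', hspanc'] at this
      refine ⟨Fin.cons v b', ?_, ?_⟩
      · rw [Fin.range_cons, Submodule.span_insert, hspanb', hspanc']
        apply le_antisymm
        · apply sup_le
          · rw [Submodule.span_singleton_le_iff_mem]
            exact hv
          · exact inf_le_right
        · rw [Submodule.span_le]
          rintro _ ⟨i, rfl⟩
          have hmem : c i - (f (c i) / B q h v v) • v ∈ W := by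
            rw [hWdef, Submodule.mem_inf]
            constructor
            · rw [LinearMap.mem_ker, map_sub, LinearMap.map_smul, hfv, smul_eq_mul,
                div_mul_cancel₀ _ hvv, sub_self]
            · exact Submodule.sub_mem _ (Submodule.subset_span (Set.mem_range_self i))
                (Submodule.smul_mem _ _ hv)
          have hdecomp : c i = (f (c i) / B q h v v) • v + (c i - (f (c i) / B q h v v) • v) := by
            abel
          rw [hdecomp]
          exact Submodule.add_mem _
            (Submodule.mem_sup_left (Submodule.smul_mem _ _ (Submodule.mem_span_singleton_self v)))
            (Submodule.mem_sup_right hmem)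
      · intro i j hij
        rcases Fin.eq_zero_or_eq_succ i with rfl | ⟨i', rfl⟩ <;>
          rcases Fin.eq_zero_or_eq_succ j with rfl | ⟨j', rfl⟩
        · exact absurd rfl hij
        · rw [Fin.cons_zero, Fin.cons_succ]
          have := (Submodule.mem_inf.mp (hWdef ▸ hb'W j')).1
          rwa [LinearMap.mem_ker] at this
        · rw [Fin.cons_zero, Fin.cons_succ]
          rw [B_conj hp hq hF h hherm]
          have := (Submodule.mem_inf.mp (hWdef ▸ hb'W i')).1
          rw [LinearMap.mem_ker] at this
          rw [show B q h v (b' i') = 0 from this]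
          exact zero_pow (by have := two_le_q hp he hq; omega)
        · rw [Fin.cons_succ, Fin.cons_succ]
          exact horth i' j' (fun hsame => hij (by rw [hsame]))

end Diag

end HermitianCharAux

/-- For the character `χ(h) = Σ_w ε^{tr(w̄ᵀ h w)}` on hermitian matrices, where `ε` is a
primitive `p`-th root of unity and `tr` the absolute trace of `F_q`, a hermitian matrix
`h` of rank `k` satisfies `χ(h) = (-1)^k q^(2n-k)`. -/
theorem stmt1 (p e n q : ℕ) (hp : p.Prime) (he : 0 < e) (hq : q = p ^ e)
    (F : Type) [Field F] [Fintype F] [CharP F p] (hF : Fintype.card F = q ^ 2)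
    (ε : ℂ) (hε : IsPrimitiveRoot ε p)
    (h : Matrix (Fin n) (Fin n) F) (hherm : h = (h.map (fun x => x ^ q))ᵀ)
    (k : ℕ) (hk : h.rank = k) :
    (∑ w : Fin n → F,
        ε ^ (toZModp p F
          (∑ i ∈ Finset.range e, (dotProduct (fun j => (w j) ^ q) (h.mulVec w)) ^ p ^ i)).val)
      = (-1) ^ k * (q : ℂ) ^ (2 * n - k) := by
  classical
  haveI := Fact.mk hp
  have hq2 : 2 ≤ q := HermitianCharAux.two_le_q hp he hq
  have hq0 : q ≠ 0 := by omega
  have hherm' : ∀ i j, h i j = h j i ^ q := by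
    intro i j
    conv_lhs => rw [hherm]
    rfl
  -- rewrite the summand in terms of psi and B
  have hsummand : ∀ w : Fin n → F,
      (ε ^ (toZModp p F
        (∑ i ∈ Finset.range e,
          (dotProduct (fun j => (w j) ^ q) (h.mulVec w)) ^ p ^ i)).val)
      = HermitianCharAux.psi p e ε (HermitianCharAux.B q h w w) := by
    intro w
    rw [HermitianCharAux.psi, HermitianCharAux.Tr, HermitianCharAux.B_dot h w w]
  rw [Finset.sum_congr rfl (fun w _ => hsummand w)]
  -- orthogonal basis
  obtain ⟨b, hspan, horth⟩ :=
    HermitianCharAux.diag_ind hp he hq hF h hherm' n ⇑(Pi.basisFun F (Fin n))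
  have hspan_top : ⊤ ≤ Submodule.span F (Set.range b) := by
    rw [hspan, Module.Basis.span_eq]
  have hcardn : Fintype.card (Fin n) = Module.finrank F (Fin n → F) := by
    simp [Module.finrank_pi]
  set bb := basisOfTopLeSpanOfCardEqFinrank b hspan_top hcardn with hbb
  have hbbcoe : ⇑bb = b := coe_basisOfTopLeSpanOfCardEqFinrank b hspan_top hcardn
  set d : Fin n → F := fun i => HermitianCharAux.B q h (b i) (b i) with hd
  have hdS : ∀ i, (d i) ^ q = d i := by
    intro i
    exact (HermitianCharAux.B_conj hp hq hF h hherm' (b i) (b i)).symm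
  -- the congruence matrices
  set gc : Matrix (Fin n) (Fin n) F := Matrix.of (fun i j => b j i) with hgc
  set gr : Matrix (Fin n) (Fin n) F := Matrix.of (fun i j => (b i j) ^ q) with hgr
  have hentry : ∀ i j, (gr * h * gc) i j = HermitianCharAux.B q h (b i) (b j) := by
    intro i j
    simp only [Matrix.mul_apply, hgr, hgc, Matrix.of_apply, HermitianCharAux.B]
    simp only [Finset.sum_mul]
    try rw [Finset.sum_comm]
    try exact Finset.sum_congr rfl fun a _ => Finset.sum_congr rfl fun c _ => by ring
  have hdiagm : gr * h * gc = Matrix.diagonal d := by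
    ext i j
    rw [hentry i j]
    by_cases hij : i = j
    · subst hij; rw [Matrix.diagonal_apply_eq]
    · rw [Matrix.diagonal_apply_ne _ hij]
      exact horth i j hij
  -- invertibility
  have hgc_eq : gc = (Pi.basisFun F (Fin n)).toMatrix ⇑bb := by
    ext i j
    rw [Module.Basis.toMatrix_apply, Pi.basisFun_repr, hbbcoe]
    rfl
  have hinvgc : IsUnit gc.det := by
    rw [hgc_eq]
    letI := (Pi.basisFun F (Fin n)).invertibleToMatrix bb
    exact Matrix.isUnit_det_of_invertible _
  have hinvgr : IsUnit gr.det := by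
    have hgr_eq : gr = (gcᵀ).map (fun x => x ^ q) := by
      ext i j
      simp only [hgr, hgc, Matrix.map_apply, Matrix.transpose_apply, Matrix.of_apply]
    have hφ : ∀ x : F, x ^ q = iterateFrobenius F p e x := fun x => by
      rw [iterateFrobenius_def, hq]
    have hgr_eq2 : gr = (gcᵀ).map (iterateFrobenius F p e) := by
      rw [hgr_eq]
      ext i j
      simp only [Matrix.map_apply, hφ]
    have hdetgr : gr.det = iterateFrobenius F p e gc.det := by
      rw [hgr_eq2, ← RingHom.mapMatrix_apply, ← RingHom.map_det, Matrix.det_transpose]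
    rw [isUnit_iff_ne_zero, hdetgr]
    intro habs
    have := (map_eq_zero_iff _ (iterateFrobenius F p e).injective).mp habs
    rw [isUnit_iff_ne_zero] at hinvgc
    exact hinvgc this
  -- rank bookkeeping
  have hrank : (gr * h * gc).rank = h.rank := by
    rw [Matrix.rank_mul_eq_left_of_isUnit_det gc (gr * h) hinvgc,
      Matrix.rank_mul_eq_right_of_isUnit_det gr h hinvgr]
  have hkcount : Fintype.card {i // d i ≠ 0} = k := by
    rw [← Matrix.rank_diagonal d, ← hdiagm, hrank, hk]
  have hkn : k ≤ n := by
    rw [← hkcount]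
    calc Fintype.card {i // d i ≠ 0} ≤ Fintype.card (Fin n) := Fintype.card_subtype_le _
      _ = n := Fintype.card_fin n
  -- change of variables in the sum
  have hcov := Equiv.sum_comp (bb.equivFun.symm.toEquiv)
    (fun w => HermitianCharAux.psi p e ε (HermitianCharAux.B q h w w))
  rw [← hcov]
  have hEv : ∀ v : Fin n → F, bb.equivFun.symm v = ∑ i, v i • b i := by
    intro v
    rw [Module.Basis.equivFun_symm_apply]
    exact Finset.sum_congr rfl fun i _ => by rw [hbbcoe]
  have hBv : ∀ v : Fin n → F,
      HermitianCharAux.B q h (bb.equivFun.symm v) (bb.equivFun.symm v)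
      = ∑ i, d i * (v i) ^ (q + 1) := by
    intro v
    rw [hEv, HermitianCharAux.B_sum_left hp he hq h]
    refine Finset.sum_congr rfl fun i _ => ?_
    rw [HermitianCharAux.B_smul_left h, HermitianCharAux.B_sum_right h]
    rw [Finset.sum_eq_single i
      (fun j _ hji => by
        rw [HermitianCharAux.B_smul_right h, horth i j (Ne.symm hji), mul_zero])
      (fun habs => absurd (Finset.mem_univ i) habs)]
    rw [HermitianCharAux.B_smul_right h]
    simp only [hd]
    ring
  have hterm : ∀ (v : Fin n → F) (i : Fin n),
      (d i * (v i) ^ (q + 1)) ^ q = d i * (v i) ^ (q + 1) := by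
    intro v i
    rw [mul_pow, hdS i, HermitianCharAux.pow_q_add_one_pow_q hF hq0]
  have hstep : ∀ v : Fin n → F,
      (fun w => HermitianCharAux.psi p e ε (HermitianCharAux.B q h w w))
        (bb.equivFun.symm.toEquiv v)
      = ∏ i, HermitianCharAux.psi p e ε (d i * (v i) ^ (q + 1)) := by
    intro v
    show HermitianCharAux.psi p e ε
      (HermitianCharAux.B q h (bb.equivFun.symm v) (bb.equivFun.symm v)) = _
    rw [hBv v]
    exact HermitianCharAux.psi_sum hp he hq hε univ _ (fun i _ => hterm v i)
  rw [Finset.sum_congr rfl (fun v _ => hstep v)]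
  -- swap sum and product
  have hswap : (∑ v : Fin n → F, ∏ i, HermitianCharAux.psi p e ε (d i * (v i) ^ (q + 1)))
      = ∏ i, ∑ x : F, HermitianCharAux.psi p e ε (d i * x ^ (q + 1)) := by
    rw [Finset.prod_univ_sum]
    rw [← Fintype.piFinset_univ]
  rw [hswap]
  -- evaluate each factor
  have hfactor : ∀ i, (∑ x : F, HermitianCharAux.psi p e ε (d i * x ^ (q + 1)))
      = if d i = 0 then ((q : ℂ)) ^ 2 else -(q : ℂ) := by
    intro i
    by_cases h0 : d i = 0
    · rw [if_pos h0]
      have : ∀ x : F, HermitianCharAux.psi p e ε (d i * x ^ (q + 1))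
          = 1 := by
        intro x
        rw [h0, zero_mul, HermitianCharAux.psi_zero hp he]
      rw [Finset.sum_congr rfl (fun x _ => this x), Finset.sum_const, Finset.card_univ, hF]
      push_cast
      ring
    · rw [if_neg h0]
      exact HermitianCharAux.gauss_one hp he hq hF hε (d i) (hdS i) h0
  rw [Finset.prod_congr rfl (fun i _ => hfactor i)]
  -- final computation
  rw [Finset.prod_ite (fun _ => ((q:ℂ))^2) (fun _ => -(q:ℂ)), Finset.prod_const,
    Finset.prod_const]
  have hc1 : (univ.filter fun i : Fin n => ¬ d i = 0).card = k := by
    rw [← hkcount, Fintype.card_subtype]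
  have hc2 : (univ.filter fun i : Fin n => d i = 0).card = n - k := by
    have hsplit := Finset.card_filter_add_card_filter_not
      (s := (univ : Finset (Fin n))) (p := fun i => d i = 0)
    rw [Finset.card_univ, Fintype.card_fin] at hsplit
    have hc1' := hc1
    omega
  rw [hc1, hc2]
  have hneg : (-(q:ℂ))^k = (-1)^k * (q:ℂ)^k := by
    rw [neg_pow]
  rw [hneg, ← pow_mul]
  calc (q:ℂ)^(2*(n-k)) * ((-1)^k * (q:ℂ)^k)
      = (-1)^k * ((q:ℂ)^(2*(n-k)) * (q:ℂ)^k) := by ring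
    _ = (-1)^k * (q:ℂ)^(2*(n-k)+k) := by rw [pow_add]
    _ = (-1)^k * (q:ℂ)^(2*n-k) := by rw [show 2*(n-k)+k = 2*n-k from by omega]
end

section
/- Let U be an additive subgroup of H_n(F_{q^2}) such that every nonzero element of U has rank exactly k, where k ≠ 0 is odd. Then |U| ≤ q^k. -/
set_option linter.unusedSectionVars false

open Matrix Finset
open scoped Classical

section Prelim

variable {F : Type} [Field F] [Fintype F] {q : ℕ}

/-- number of m-th roots of c is at most m -/
lemma rootBound {m : ℕ} (hm : 0 < m) (c : F) :
    (univ.filter fun x : F => x ^ m = c).card ≤ m := by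
  classical
  calc (univ.filter fun x : F => x ^ m = c).card
      ≤ (Polynomial.nthRoots m c).toFinset.card := Finset.card_le_card (by
        intro x hx
        simp only [mem_filter] at hx
        simp [Multiset.mem_toFinset, Polynomial.mem_nthRoots hm, hx.2])
    _ ≤ Multiset.card (Polynomial.nthRoots m c) := Multiset.toFinset_card_le _
    _ ≤ m := Polynomial.card_nthRoots m c

lemma pow_q_q (hcard : Fintype.card F = q ^ 2) (x : F) : (x ^ q) ^ q = x := by
  rw [← pow_mul, ← sq, ← hcard, FiniteField.pow_card]

lemma norm_fixed (hcard : Fintype.card F = q ^ 2) (x : F) :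
    (x ^ (q + 1)) ^ q = x ^ (q + 1) := by
  have h : x ^ (q + 1) = x ^ q * x := by rw [pow_succ]
  rw [h, mul_pow, pow_q_q hcard, mul_comm]

/-- the fixed points of x ↦ x^q number at most q -/
lemma Ecard_le (hq2 : 2 ≤ q) : (univ.filter fun x : F => x ^ q = x).card ≤ q := by
  classical
  set P : Polynomial F := Polynomial.X ^ q - Polynomial.X with hP
  have hdeg : P.natDegree = q := by
    rw [hP]
    rw [Polynomial.natDegree_sub_eq_left_of_natDegree_lt]
    · exact Polynomial.natDegree_X_pow q
    · rw [Polynomial.natDegree_X_pow, Polynomial.natDegree_X]; omega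
  have hP0 : P ≠ 0 := by
    intro h
    rw [h] at hdeg
    simp at hdeg
    omega
  calc (univ.filter fun x : F => x ^ q = x).card
      ≤ P.roots.toFinset.card := Finset.card_le_card (by
        intro x hx
        simp only [mem_filter] at hx
        simp only [Multiset.mem_toFinset, Polynomial.mem_roots hP0, Polynomial.IsRoot, hP,
          Polynomial.eval_sub, Polynomial.eval_pow, Polynomial.eval_X]
        rw [← hP, Polynomial.mem_roots hP0, Polynomial.IsRoot, hP, Polynomial.eval_sub,
          Polynomial.eval_pow, Polynomial.eval_X]
        rw [hx.2]; ring)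
    _ ≤ Multiset.card P.roots := Multiset.toFinset_card_le _
    _ ≤ P.natDegree := Polynomial.card_roots' P
    _ = q := hdeg

/-- norm fibers over nonzero fixed points have exactly q+1 elements -/
lemma fiber_card (hq2 : 2 ≤ q) (hcard : Fintype.card F = q ^ 2)
    {c : F} (hc0 : c ≠ 0) (hcE : c ^ q = c) :
    (univ.filter fun x : F => x ^ (q + 1) = c).card = q + 1 := by
  classical
  set Es : Finset F := univ.filter (fun x : F => x ^ q = x ∧ x ≠ 0) with hEs
  have hEscard : Es.card + 1 ≤ q := by
    have hsub : insert (0 : F) Es ⊆ univ.filter (fun x : F => x ^ q = x) := by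
      intro x hx
      rcases Finset.mem_insert.mp hx with h | h
      · subst h; simp [zero_pow (by omega : q ≠ 0)]
      · simp only [hEs, mem_filter] at h ⊢; exact ⟨h.1, h.2.1⟩
    have h0 : (0 : F) ∉ Es := by simp [hEs]
    calc Es.card + 1 = (insert (0:F) Es).card := (Finset.card_insert_of_notMem h0).symm
      _ ≤ (univ.filter fun x : F => x ^ q = x).card := Finset.card_le_card hsub
      _ ≤ q := Ecard_le hq2
  set T : Finset F := univ.filter (fun x : F => x ≠ 0) with hT
  have hTcard : T.card = q ^ 2 - 1 := by
    rw [hT, Finset.filter_ne', Finset.card_erase_of_mem (mem_univ _), Finset.card_univ, hcard]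
  have hmap : ∀ x ∈ T, x ^ (q + 1) ∈ Es := by
    intro x hx
    simp only [hT, mem_filter] at hx
    simp only [hEs, mem_filter]
    exact ⟨mem_univ _, norm_fixed hcard x, pow_ne_zero _ hx.2⟩
  have hfib := Finset.card_eq_sum_card_fiberwise hmap
  have hfib_le : ∀ c' ∈ Es, (T.filter fun x => x ^ (q+1) = c').card ≤ q + 1 := by
    intro c' _
    calc (T.filter fun x => x ^ (q+1) = c').card
        ≤ (univ.filter fun x : F => x ^ (q+1) = c').card :=
          Finset.card_le_card (fun x hx => by
            simp only [mem_filter] at hx ⊢; exact ⟨mem_univ _, hx.2⟩)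
      _ ≤ q + 1 := rootBound (by omega) c'
  have hcEs : c ∈ Es := by simp only [hEs, mem_filter]; exact ⟨mem_univ _, hcE, hc0⟩
  have heqT : (univ.filter fun x : F => x ^ (q+1) = c) = T.filter fun x => x ^ (q+1) = c := by
    ext x
    simp only [mem_filter, hT]
    constructor
    · rintro ⟨-, h⟩
      refine ⟨⟨mem_univ _, ?_⟩, h⟩
      rintro rfl
      exact hc0 (by rw [← h, zero_pow (by omega : q + 1 ≠ 0)])
    · rintro ⟨⟨-, -⟩, h⟩; exact ⟨mem_univ _, h⟩
  rw [heqT]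
  by_contra hne
  have hlt : (T.filter fun x => x ^ (q+1) = c).card < q + 1 :=
    lt_of_le_of_ne (hfib_le c hcEs) hne
  have hstrict : T.card < ∑ _c' ∈ Es, (q + 1) := by
    rw [hfib]
    exact Finset.sum_lt_sum (fun i hi => hfib_le i hi) ⟨c, hcEs, hlt⟩
  rw [Finset.sum_const, smul_eq_mul, hTcard] at hstrict
  have hmul : Es.card * (q + 1) ≤ (q - 1) * (q + 1) := Nat.mul_le_mul_right _ (by omega)
  obtain ⟨q', rfl⟩ : ∃ q', q = q' + 1 := ⟨q - 1, by omega⟩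
  have h1 : q' + 1 - 1 = q' := rfl
  rw [h1] at hmul
  have h2 : (q' + 1) ^ 2 = q' * (q' + 1 + 1) + 1 := by ring
  omega

end Prelim
section Key

variable {F : Type} [Field F] [Fintype F] {q : ℕ} {n : ℕ}

/-- the hermitian-type form attached to a matrix -/
noncomputable def Bf (q : ℕ) {n : ℕ} (A : Matrix (Fin n) (Fin n) F) (v w : Fin n → F) : F :=
  ∑ i, ∑ j, (v i) ^ q * A i j * w j

lemma Bf_add_right (A : Matrix (Fin n) (Fin n) F) (v w w' : Fin n → F) :
    Bf q A v (w + w') = Bf q A v w + Bf q A v w' := by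
  simp only [Bf, Pi.add_apply, mul_add, Finset.sum_add_distrib]

lemma Bf_smul_right (A : Matrix (Fin n) (Fin n) F) (c : F) (v w : Fin n → F) :
    Bf q A v (c • w) = c * Bf q A v w := by
  simp only [Bf, Pi.smul_apply, smul_eq_mul, Finset.mul_sum]
  exact Finset.sum_congr rfl fun i _ => Finset.sum_congr rfl fun j _ => by ring

lemma Bf_add_left (hfrob : ∀ x y : F, (x + y) ^ q = x ^ q + y ^ q)
    (A : Matrix (Fin n) (Fin n) F) (v v' w : Fin n → F) :
    Bf q A (v + v') w = Bf q A v w + Bf q A v' w := by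
  simp only [Bf, Pi.add_apply, hfrob, add_mul, Finset.sum_add_distrib]

lemma Bf_smul_left (A : Matrix (Fin n) (Fin n) F) (c : F) (v w : Fin n → F) :
    Bf q A (c • v) w = c ^ q * Bf q A v w := by
  simp only [Bf, Pi.smul_apply, smul_eq_mul, mul_pow, Finset.mul_sum]
  exact Finset.sum_congr rfl fun i _ => Finset.sum_congr rfl fun j _ => by ring

lemma Bf_zero_left (hq0 : q ≠ 0) (A : Matrix (Fin n) (Fin n) F) (w : Fin n → F) :
    Bf q A 0 w = 0 := by
  simp [Bf, zero_pow hq0]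

/-- the frobenius x ↦ x^q as an additive hom -/
def frobHom (hfrob : ∀ x y : F, (x + y) ^ q = x ^ q + y ^ q) : F →+ F :=
  AddMonoidHom.mk' (fun x => x ^ q) hfrob

lemma pow_q_sum (hfrob : ∀ x y : F, (x + y) ^ q = x ^ q + y ^ q)
    {ι : Type*} (s : Finset ι) (f : ι → F) :
    (∑ i ∈ s, f i) ^ q = ∑ i ∈ s, (f i) ^ q :=
  map_sum (frobHom hfrob) f s

lemma pow_q_neg (hfrob : ∀ x y : F, (x + y) ^ q = x ^ q + y ^ q) (x : F) :
    (-x) ^ q = -(x ^ q) :=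
  map_neg (frobHom hfrob) x

lemma herm_entry (hcard : Fintype.card F = q ^ 2) {A : Matrix (Fin n) (Fin n) F}
    (hA : A = (A.map (fun x => x ^ q))ᵀ) (i j : Fin n) : (A i j) ^ q = A j i := by
  have h1 : A i j = (A j i) ^ q := by
    conv_lhs => rw [hA]
    rfl
  rw [h1, pow_q_q hcard]

lemma Bf_matrix_sub (A A' : Matrix (Fin n) (Fin n) F) (v w : Fin n → F) :
    Bf q (A - A') v w = Bf q A v w - Bf q A' v w := by
  simp only [Bf, Matrix.sub_apply, mul_sub, sub_mul, Finset.sum_sub_distrib]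

lemma Bf_conj (hcard : Fintype.card F = q ^ 2)
    (hfrob : ∀ x y : F, (x + y) ^ q = x ^ q + y ^ q)
    {A : Matrix (Fin n) (Fin n) F} (hA : A = (A.map (fun x => x ^ q))ᵀ)
    (v w : Fin n → F) : (Bf q A v w) ^ q = Bf q A w v := by
  have hAij : ∀ i j, (A i j) ^ q = A j i := by
    intro i j
    have h1 : A i j = (A j i) ^ q := by
      conv_lhs => rw [hA]
      rfl
    rw [h1, pow_q_q hcard]
  calc (Bf q A v w) ^ q
      = ∑ i, (∑ j, (v i) ^ q * A i j * w j) ^ q := pow_q_sum hfrob _ _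
    _ = ∑ i, ∑ j, ((v i) ^ q * A i j * w j) ^ q :=
        Finset.sum_congr rfl fun i _ => pow_q_sum hfrob _ _
    _ = ∑ i, ∑ j, (w j) ^ q * A j i * v i := by
        refine Finset.sum_congr rfl fun i _ => Finset.sum_congr rfl fun j _ => ?_
        rw [mul_pow, mul_pow, pow_q_q hcard, hAij i j]
        ring
    _ = ∑ j, ∑ i, (w j) ^ q * A j i * v i := Finset.sum_comm
    _ = Bf q A w v := rfl

/-- the radical of the form restricted to a submodule -/
noncomputable def radS (hfrob : ∀ x y : F, (x + y) ^ q = x ^ q + y ^ q) (hq0 : q ≠ 0)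
    (A : Matrix (Fin n) (Fin n) F) (W : Submodule F (Fin n → F)) :
    Submodule F (Fin n → F) where
  carrier := {v | v ∈ W ∧ ∀ w ∈ W, Bf q A v w = 0}
  add_mem' := by
    rintro a b ⟨haW, ha⟩ ⟨hbW, hb⟩
    refine ⟨W.add_mem haW hbW, fun w hw => ?_⟩
    rw [Bf_add_left hfrob, ha w hw, hb w hw, add_zero]
  zero_mem' := ⟨W.zero_mem, fun w hw => Bf_zero_left hq0 A w⟩
  smul_mem' := by
    rintro c v ⟨hvW, hv⟩
    refine ⟨W.smul_mem c hvW, fun w hw => ?_⟩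
    rw [Bf_smul_left, hv w hw, mul_zero]

lemma mem_radS {hfrob : ∀ x y : F, (x + y) ^ q = x ^ q + y ^ q} {hq0 : q ≠ 0}
    {A : Matrix (Fin n) (Fin n) F} {W : Submodule F (Fin n → F)} {v : Fin n → F} :
    v ∈ radS hfrob hq0 A W ↔ v ∈ W ∧ ∀ w ∈ W, Bf q A v w = 0 := Iff.rfl

lemma radS_le {hfrob : ∀ x y : F, (x + y) ^ q = x ^ q + y ^ q} {hq0 : q ≠ 0}
    {A : Matrix (Fin n) (Fin n) F} {W : Submodule F (Fin n → F)} :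
    radS hfrob hq0 A W ≤ W := fun _ hv => hv.1

/-- the number of isotropic vectors in a submodule -/
noncomputable def Zc (q : ℕ) {n : ℕ} (A : Matrix (Fin n) (Fin n) F)
    (W : Submodule F (Fin n → F)) : ℕ :=
  (Finset.univ.filter fun v => v ∈ W ∧ Bf q A v v = 0).card

lemma card_filter_mem (hcard : Fintype.card F = q ^ 2) (W : Submodule F (Fin n → F)) :
    (Finset.univ.filter fun v => v ∈ W).card = q ^ (2 * Module.finrank F W) := by
  rw [← Fintype.card_subtype]
  rw [Module.card_eq_pow_finrank (K := F) (V := W), hcard, ← pow_mul]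

end Key
section KeyLemma

variable {F : Type} [Field F] [Fintype F] {q : ℕ} {n : ℕ}

lemma key_degen (hcard : Fintype.card F = q ^ 2)
    {hfrob : ∀ x y : F, (x + y) ^ q = x ^ q + y ^ q} {hq0 : q ≠ 0}
    {A : Matrix (Fin n) (Fin n) F} {W : Submodule F (Fin n → F)} {d : ℕ}
    (hfr : Module.finrank F W = d) (hdeg : radS hfrob hq0 A W = W) :
    (q : ℤ) * Zc q A W =
      (q : ℤ) ^ (2 * d) + (-1) ^ (d - Module.finrank F (radS hfrob hq0 A W)) *
        ((q : ℤ) - 1) * (q : ℤ) ^ (d + Module.finrank F (radS hfrob hq0 A W)) := by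
  have h1 : Zc q A W = q ^ (2 * d) := by
    have heq : (Finset.univ.filter fun v : Fin n → F => v ∈ W ∧ Bf q A v v = 0)
        = Finset.univ.filter fun v => v ∈ W := by
      ext v
      simp only [Finset.mem_filter, Finset.mem_univ, true_and, and_iff_left_iff_imp]
      intro hvW
      have hv : v ∈ radS hfrob hq0 A W := hdeg.symm ▸ hvW
      exact hv.2 v hvW
    rw [Zc, heq, card_filter_mem hcard, hfr]
  have h2 : Module.finrank F (radS hfrob hq0 A W) = d := by rw [hdeg, hfr]
  rw [h1, h2, Nat.sub_self, pow_zero, one_mul]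
  push_cast
  have : (q : ℤ) ^ (d + d) = (q : ℤ) ^ (2 * d) := by ring_nf
  rw [this]
  ring

lemma key (hq2 : 2 ≤ q) (hcard : Fintype.card F = q ^ 2)
    (hfrob : ∀ x y : F, (x + y) ^ q = x ^ q + y ^ q) (hq0 : q ≠ 0)
    {A : Matrix (Fin n) (Fin n) F} (hA : A = (A.map (fun x => x ^ q))ᵀ) :
    ∀ (d : ℕ) (W : Submodule F (Fin n → F)), Module.finrank F W = d →
      (q : ℤ) * Zc q A W =
        (q : ℤ) ^ (2 * d) + (-1) ^ (d - Module.finrank F (radS hfrob hq0 A W)) *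
          ((q : ℤ) - 1) * (q : ℤ) ^ (d + Module.finrank F (radS hfrob hq0 A W)) := by
  intro d
  induction d with
  | zero =>
    intro W hfr
    have hdeg : radS hfrob hq0 A W = W := by
      by_contra hne
      have hlt : Module.finrank F (radS hfrob hq0 A W) < Module.finrank F W :=
        Submodule.finrank_lt_finrank_of_lt (lt_of_le_of_ne radS_le hne)
      omega
    exact key_degen hcard hfr hdeg
  | succ m IH =>
    intro W hfr
    by_cases hdeg : radS hfrob hq0 A W = W
    · exact key_degen hcard hfr hdeg
    -- nondegenerate case
    -- 1. find a vector with nonzero self-pairing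
    have hpol : ∃ u ∈ W, Bf q A u u ≠ 0 := by
      obtain ⟨v, hvW, hvrad⟩ : ∃ v ∈ W, v ∉ radS hfrob hq0 A W := by
        by_contra hc
        push_neg at hc
        exact hdeg (le_antisymm radS_le hc)
      have hvw : ∃ w ∈ W, Bf q A v w ≠ 0 := by
        by_contra hc
        push_neg at hc
        exact hvrad ⟨hvW, hc⟩
      obtain ⟨w, hwW, hvw⟩ := hvw
      by_contra hiso
      push_neg at hiso
      obtain ⟨lam, hlam⟩ : ∃ lam : F, lam ^ q ≠ lam := by
        by_contra hall
        push_neg at hall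
        have huniv : (Finset.univ : Finset F) = Finset.univ.filter fun x : F => x ^ q = x := by
          ext x; simp [hall x]
        have hc := Ecard_le (F := F) hq2
        rw [← huniv, Finset.card_univ, hcard] at hc
        nlinarith
      have h1 : ∀ a b, a ∈ W → b ∈ W → Bf q A a b + Bf q A b a = 0 := by
        intro a b ha hb
        have h := hiso (a + b) (W.add_mem ha hb)
        rw [Bf_add_left hfrob, Bf_add_right, Bf_add_right, hiso a ha, hiso b hb] at h
        linear_combination h
      have h4 := h1 v w hvW hwW
      have h3 := h1 (lam • v) w (W.smul_mem _ hvW) hwW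
      rw [Bf_smul_left, Bf_smul_right] at h3
      have h5 : (lam ^ q - lam) * Bf q A v w = 0 := by linear_combination h3 - lam * h4
      rcases mul_eq_zero.mp h5 with h | h
      · exact hlam (sub_eq_zero.mp h)
      · exact hvw h
    -- 2. scale to get Bf u u = 1
    obtain ⟨v0, hv0W, hv0⟩ := hpol
    have hcE : (Bf q A v0 v0) ^ q = Bf q A v0 v0 := Bf_conj hcard hfrob hA v0 v0
    have hcinv : ((Bf q A v0 v0)⁻¹) ^ q = (Bf q A v0 v0)⁻¹ := by
      rw [inv_pow, hcE]
    obtain ⟨mu, hmu⟩ : ∃ mu : F, mu ^ (q + 1) = (Bf q A v0 v0)⁻¹ := by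
      have hpos := fiber_card hq2 hcard (inv_ne_zero hv0) hcinv
      have hne : (Finset.univ.filter fun x : F => x ^ (q+1) = (Bf q A v0 v0)⁻¹).Nonempty := by
        rw [← Finset.card_pos, hpos]; omega
      obtain ⟨mu, hmu⟩ := hne
      exact ⟨mu, (Finset.mem_filter.mp hmu).2⟩
    set u : Fin n → F := mu • v0 with hu
    have huW : u ∈ W := W.smul_mem _ hv0W
    have huu : Bf q A u u = 1 := by
      rw [hu, Bf_smul_left, Bf_smul_right, ← mul_assoc, ← pow_succ, hmu]
      exact inv_mul_cancel₀ hv0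
    have hu0 : u ≠ 0 := by
      intro h
      rw [h, Bf_zero_left hq0] at huu
      exact one_ne_zero huu.symm
    -- 3. the linear functional and the hyperplane
    set φ : (Fin n → F) →ₗ[F] F :=
      { toFun := fun w => Bf q A u w
        map_add' := fun a b => Bf_add_right A u a b
        map_smul' := fun c w => by simp only [RingHom.id_apply, smul_eq_mul]; exact Bf_smul_right A c u w } with hphi
    have hφapp : ∀ w, φ w = Bf q A u w := fun _ => rfl
    have hφu : φ u = 1 := by rw [hφapp]; exact huu
    set H : Submodule F (Fin n → F) := W ⊓ LinearMap.ker φ with hH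
    have hHle : H ≤ W := inf_le_left
    have hker_eq : ∀ x, x ∈ LinearMap.ker φ → Bf q A u x = 0 := fun x hx => by
      have h := LinearMap.mem_ker.mp hx
      rwa [hφapp] at h
    have hdecomp : ∀ w ∈ W, w - φ w • u ∈ H := by
      intro w hw
      refine Submodule.mem_inf.mpr ⟨W.sub_mem hw (W.smul_mem _ huW), ?_⟩
      rw [LinearMap.mem_ker, map_sub, _root_.map_smul, hφu, smul_eq_mul, mul_one, sub_self]
    -- 4. finrank H = m
    have hsup : H ⊔ Submodule.span F {u} = W := by
      apply le_antisymm
      · exact sup_le hHle ((Submodule.span_singleton_le_iff_mem _ _).mpr huW)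
      · intro w hw
        have h2 : w = (w - φ w • u) + φ w • u := by abel
        rw [h2]
        exact Submodule.add_mem _ (Submodule.mem_sup_left (hdecomp w hw))
          (Submodule.mem_sup_right (Submodule.smul_mem _ _ (Submodule.mem_span_singleton_self u)))
    have hinf : H ⊓ Submodule.span F {u} = ⊥ := by
      rw [eq_bot_iff]
      intro x hx
      obtain ⟨hxH, hxs⟩ := Submodule.mem_inf.mp hx
      obtain ⟨a, rfl⟩ := Submodule.mem_span_singleton.mp hxs
      have hker : φ (a • u) = 0 := (Submodule.mem_inf.mp hxH).2
      rw [_root_.map_smul, hφu, smul_eq_mul, mul_one] at hker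
      rw [hker, zero_smul]
      exact Submodule.zero_mem _
    have hfrH : Module.finrank F H = m := by
      have h := Submodule.finrank_sup_add_finrank_inf_eq H (Submodule.span F {u})
      rw [hsup, hinf, hfr, finrank_span_singleton hu0, finrank_bot] at h
      omega
    -- 5. the radicals agree
    have hconj0 : ∀ x, Bf q A u x = 0 → Bf q A x u = 0 := by
      intro x hx
      rw [← Bf_conj hcard hfrob hA u x, hx, zero_pow hq0]
    have hconj0' : ∀ x, Bf q A x u = 0 → Bf q A u x = 0 := by
      intro x hx
      rw [← Bf_conj hcard hfrob hA x u, hx, zero_pow hq0]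
    have hradHW : radS hfrob hq0 A H = radS hfrob hq0 A W := by
      ext x
      simp only [mem_radS]
      constructor
      · rintro ⟨hxH, hx⟩
        have hxW : x ∈ W := hHle hxH
        have hxu : Bf q A x u = 0 := hconj0 x (hker_eq x (Submodule.mem_inf.mp hxH).2)
        refine ⟨hxW, fun w hw => ?_⟩
        have h2 : Bf q A x w = Bf q A x (w - φ w • u) + φ w * Bf q A x u := by
          rw [← Bf_smul_right, ← Bf_add_right]
          congr 1
          abel
        rw [h2, hx _ (hdecomp w hw), hxu, mul_zero, add_zero]
      · rintro ⟨hxW, hx⟩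
        refine ⟨Submodule.mem_inf.mpr ⟨hxW, LinearMap.mem_ker.mpr ?_⟩,
          fun w hw => hx w (hHle hw)⟩
        rw [hφapp]
        exact hconj0' x (hx u huW)
    set s : ℕ := Module.finrank F (radS hfrob hq0 A W) with hs
    have hsm : s ≤ m := by
      rw [hs, ← hradHW]
      calc Module.finrank F (radS hfrob hq0 A H) ≤ Module.finrank F H :=
            Submodule.finrank_mono radS_le
        _ = m := hfrH
    -- 6. the counting identity
    have hZle : Zc q A H ≤ q ^ (2 * m) := by
      rw [← hfrH, ← card_filter_mem hcard H]
      apply Finset.card_le_card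
      intro x hx
      simp only [Finset.mem_filter] at hx ⊢
      exact ⟨hx.1, hx.2.1⟩
    have hexp : ∀ (x : F) (h : Fin n → F), h ∈ H →
        Bf q A (x • u + h) (x • u + h) = x ^ (q + 1) + Bf q A h h := by
      intro x h hh
      have huh : Bf q A u h = 0 := hker_eq h (Submodule.mem_inf.mp hh).2
      have hhu : Bf q A h u = 0 := hconj0 h huh
      rw [Bf_add_left hfrob A (x • u) h (x • u + h), Bf_add_right A (x • u) (x • u) h,
        Bf_add_right A h (x • u) h, Bf_smul_left A x u (x • u), Bf_smul_left A x u h,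
        Bf_smul_right A x u u, Bf_smul_right A x h u, huu, huh, hhu]
      ring
    have hcount : Zc q A W = Zc q A H + (q + 1) * (q ^ (2 * m) - Zc q A H) := by
      set SW := Finset.univ.filter (fun v : Fin n → F => v ∈ W ∧ Bf q A v v = 0) with hSW
      set HF := Finset.univ.filter (fun h : Fin n → F => h ∈ H) with hHF
      have hmapS : ∀ v ∈ SW, v - φ v • u ∈ HF := by
        intro v hv
        simp only [hSW, Finset.mem_filter] at hv
        simp only [hHF, Finset.mem_filter]
        exact ⟨Finset.mem_univ _, hdecomp v hv.2.1⟩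
      have hfib := Finset.card_eq_sum_card_fiberwise hmapS
      have hφval : ∀ (x : F) (h : Fin n → F), h ∈ H → φ (x • u + h) = x := by
        intro x h hh
        have hφh : φ h = 0 := LinearMap.mem_ker.mp (Submodule.mem_inf.mp hh).2
        rw [map_add, _root_.map_smul, hφu, hφh, smul_eq_mul, mul_one, add_zero]
      have hstep2 : ∀ h ∈ HF, (SW.filter fun v => v - φ v • u = h).card
          = (Finset.univ.filter fun x : F => x ^ (q+1) = - Bf q A h h).card := by
        intro h hh
        have hhH : h ∈ H := by
          simp only [hHF, Finset.mem_filter] at hh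
          exact hh.2
        apply Finset.card_bij (fun v _ => φ v)
        · intro v hv
          simp only [Finset.mem_filter, hSW] at hv
          obtain ⟨⟨-, hvW, hvv⟩, hpsi⟩ := hv
          simp only [Finset.mem_filter]
          refine ⟨Finset.mem_univ _, ?_⟩
          have hvdec : v = φ v • u + h := by rw [← hpsi]; abel
          have hBv := hexp (φ v) h hhH
          rw [← hvdec, hvv] at hBv
          linear_combination -hBv
        · intro v1 h1 v2 h2 heq
          simp only [Finset.mem_filter, hSW] at h1 h2
          have e1 : v1 = φ v1 • u + h := by rw [← h1.2]; abel
          have e2 : v2 = φ v2 • u + h := by rw [← h2.2]; abel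
          rw [e1, e2, heq]
        · intro x hx
          simp only [Finset.mem_filter] at hx
          have hmem : x • u + h ∈ SW := by
            simp only [Finset.mem_filter, hSW]
            have hxW : (x • u + h : Fin n → F) ∈ W := W.add_mem (W.smul_mem _ huW) (hHle hhH)
            have hBv : Bf q A (x • u + h) (x • u + h) = 0 := by
              rw [hexp x h hhH, hx.2]; ring
            exact ⟨Finset.mem_univ _, hxW, hBv⟩
          have hfibmem : (x • u + h) ∈ SW.filter fun v => v - φ v • u = h := by
            simp only [Finset.mem_filter]
            refine ⟨hmem, ?_⟩
            rw [hφval x h hhH]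
            abel
          exact ⟨x • u + h, hfibmem, hφval x h hhH⟩
      have hstep3 : ∀ h ∈ HF, (Finset.univ.filter fun x : F => x ^ (q+1) = - Bf q A h h).card
          = if Bf q A h h = 0 then 1 else q + 1 := by
        intro h hh
        by_cases h0 : Bf q A h h = 0
        · rw [if_pos h0, h0, neg_zero]
          have hsing : (Finset.univ.filter fun x : F => x ^ (q+1) = 0) = {0} := by
            ext x
            simp [pow_eq_zero_iff (by omega : q + 1 ≠ 0)]
          rw [hsing, Finset.card_singleton]
        · rw [if_neg h0]
          apply fiber_card hq2 hcard (neg_ne_zero.mpr h0)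
          rw [pow_q_neg hfrob, Bf_conj hcard hfrob hA]
      have hsum : SW.card = ∑ h ∈ HF, if Bf q A h h = 0 then 1 else q + 1 := by
        rw [hfib]
        exact Finset.sum_congr rfl fun h hh => by rw [hstep2 h hh, hstep3 h hh]
      have hZH : (HF.filter fun h => Bf q A h h = 0).card = Zc q A H := by
        rw [Zc, hHF, Finset.filter_filter]
      have hHFcard : HF.card = q ^ (2 * m) := by
        rw [hHF, card_filter_mem hcard H, hfrH]
      have hsplit := Finset.card_filter_add_card_filter_not
        (s := HF) (p := fun h => Bf q A h h = 0)
      have hsum2 : ∑ h ∈ HF, (if Bf q A h h = 0 then 1 else q + 1)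
          = (HF.filter fun h => Bf q A h h = 0).card * 1
            + (HF.filter fun h => ¬ Bf q A h h = 0).card * (q + 1) := by
        rw [Finset.sum_ite, Finset.sum_const, Finset.sum_const, smul_eq_mul, smul_eq_mul]
      have hZW : Zc q A W = SW.card := rfl
      rw [hZW, hsum, hsum2, hZH]
      have hc1 : (HF.filter fun h => ¬ Bf q A h h = 0).card = q ^ (2*m) - Zc q A H := by
        omega
      rw [hc1]
      ring
    -- 7. induction and final arithmetic
    have IHH := IH H hfrH
    rw [hradHW, ← hs] at IHH
    have hsub : m + 1 - s = (m - s) + 1 := by omega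
    have hcountZ : (Zc q A W : ℤ) =
        Zc q A H + ((q : ℤ) + 1) * ((q : ℤ) ^ (2 * m) - Zc q A H) := by
      rw [hcount]
      push_cast [Nat.cast_sub hZle]
      ring
    calc (q : ℤ) * Zc q A W
        = ((q : ℤ) + 1) * (q : ℤ) ^ (2 * m + 1) - (q : ℤ) * ((q : ℤ) * Zc q A H) := by
          rw [hcountZ]; ring
      _ = ((q : ℤ) + 1) * (q : ℤ) ^ (2 * m + 1) -
          (q : ℤ) * ((q : ℤ) ^ (2 * m) + (-1) ^ (m - s) * ((q : ℤ) - 1) * (q : ℤ) ^ (m + s)) := by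
          rw [IHH]
      _ = (q : ℤ) ^ (2 * (m + 1)) + (-1) ^ (m + 1 - s) * ((q : ℤ) - 1) * (q : ℤ) ^ (m + 1 + s) := by
          rw [hsub]
          have e1 : 2 * (m + 1) = 2 * m + 1 + 1 := by ring
          have e2 : m + 1 + s = (m + s) + 1 := by ring
          rw [e1, e2]
          ring

end KeyLemma
section Final

open Matrix Finset

/-- A linear (additively closed) constant rank-distance `k` set of hermitian `n × n`
matrices over `F_{q^2}`, with `k` odd, has size at most `q^k`. -/
theorem stmt3 (p e n k q : ℕ) (hp : p.Prime) (he : 0 < e) (hq : q = p ^ e)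
    (hk : Odd k) (hk0 : k ≠ 0)
    (F : Type) [Field F] [Fintype F] (hF : Fintype.card F = q ^ 2)
    (U : Finset (Matrix (Fin n) (Fin n) F))
    (hherm : ∀ A ∈ U, A = (A.map (fun x => x ^ q))ᵀ)
    (hzero : (0 : Matrix (Fin n) (Fin n) F) ∈ U)
    (hadd : ∀ A ∈ U, ∀ B ∈ U, A + B ∈ U)
    (hneg : ∀ A ∈ U, -A ∈ U)
    (hrank : ∀ A ∈ U, A ≠ 0 → A.rank = k) :
    U.card ≤ q ^ k := by
  classical
  have hq2 : 2 ≤ q := by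
    rw [hq]
    have := Nat.one_lt_pow (by omega : e ≠ 0) hp.one_lt
    omega
  have hq0 : q ≠ 0 := by omega
  -- characteristic
  haveI hfp : Fact p.Prime := ⟨hp⟩
  haveI hrc : CharP F (ringChar F) := ringChar.charP F
  obtain ⟨m', hm'p, hm'⟩ := FiniteField.card F (ringChar F)
  have hrcp : ringChar F = p := by
    have hdvd : ringChar F ∣ p ^ (e * 2) := by
      have hcF : Fintype.card F = p ^ (e * 2) := by rw [hF, hq, ← pow_mul]
      rw [← hcF, hm']
      exact dvd_pow_self _ m'.pos.ne'
    have := (Nat.Prime.dvd_of_dvd_pow hm'p hdvd)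
    exact (Nat.prime_dvd_prime_iff_eq hm'p hp).mp this
  haveI hcharp : CharP F p := by rwa [hrcp] at hrc
  have hfrob : ∀ x y : F, (x + y) ^ q = x ^ q + y ^ q := by
    intro x y
    rw [hq]
    exact add_pow_char_pow x y p e
  -- trivial case
  rcases le_or_gt U.card 1 with hU1 | hU1
  · exact hU1.trans (Nat.one_le_pow _ _ (by omega))
  obtain ⟨A₀, hA₀U, hA₀0⟩ := Finset.exists_mem_ne hU1 0
  have hkn : k ≤ n := by
    rw [← hrank A₀ hA₀U hA₀0]
    exact Matrix.rank_le_height A₀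
  -- finrank of ⊤
  have hfrtop : Module.finrank F (⊤ : Submodule F (Fin n → F)) = n := by
    rw [finrank_top, Module.finrank_fin_fun]
  -- the exact count of isotropic vectors for nonzero elements of U
  have hZA : ∀ A ∈ U, A ≠ 0 →
      (q : ℤ) * Zc q A ⊤ = (q:ℤ) ^ (2 * n) - ((q:ℤ) - 1) * (q:ℤ) ^ (2 * n - k) := by
    intro A hAU hA0
    have hA := hherm A hAU
    -- the radical of the full form is the kernel of mulVecLin
    have hBf_eq : ∀ v w : Fin n → F, Bf q A v w = ∑ j, ((A.mulVec v) j) ^ q * w j := by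
      intro v w
      rw [Bf, Finset.sum_comm]
      refine Finset.sum_congr rfl fun j _ => ?_
      rw [← Finset.sum_mul]
      congr 1
      rw [Matrix.mulVec, dotProduct, pow_q_sum hfrob]
      refine Finset.sum_congr rfl fun l _ => ?_
      rw [mul_pow, herm_entry hF hA j l, mul_comm]
    have hradtop : radS hfrob hq0 A ⊤ = LinearMap.ker (Matrix.mulVecLin A) := by
      ext v
      simp only [mem_radS, Submodule.mem_top, true_and, LinearMap.mem_ker,
        Matrix.mulVecLin_apply]
      constructor
      · intro h
        funext j
        have hj := h (Pi.single j 1 : Fin n → F) (by simp)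
        rw [hBf_eq] at hj
        simp only [Pi.single_apply, mul_ite, mul_one, mul_zero,
          Finset.sum_ite_eq', Finset.mem_univ, if_true] at hj
        exact pow_eq_zero_iff hq0 |>.mp hj
      · intro h w _
        rw [hBf_eq, h]
        simp [zero_pow hq0]
    have hkerfr : Module.finrank F (LinearMap.ker (Matrix.mulVecLin A)) = n - k := by
      have hrn := LinearMap.finrank_range_add_finrank_ker (Matrix.mulVecLin A)
      rw [Module.finrank_fin_fun] at hrn
      have hrk : A.rank = Module.finrank F (LinearMap.range (Matrix.mulVecLin A)) := rfl
      rw [← hrk, hrank A hAU hA0] at hrn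
      omega
    have hkey := key hq2 hF hfrob hq0 hA n ⊤ hfrtop
    rw [hradtop, hkerfr] at hkey
    have h1 : n - (n - k) = k := by omega
    have h2 : n + (n - k) = 2 * n - k := by omega
    rw [h1, h2, hk.neg_one_pow] at hkey
    rw [hkey]
    ring
  -- count of isotropic vectors for 0
  have hZ0 : Zc q (0 : Matrix (Fin n) (Fin n) F) ⊤ = q ^ (2 * n) := by
    have heq : (Finset.univ.filter fun v : Fin n → F =>
        v ∈ (⊤ : Submodule F (Fin n → F)) ∧ Bf q (0 : Matrix (Fin n) (Fin n) F) v v = 0)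
        = Finset.univ.filter fun v : Fin n → F => v ∈ (⊤ : Submodule F (Fin n → F)) := by
      ext v
      simp [Bf]
    rw [Zc, heq, card_filter_mem hF, hfrtop]
  -- double counting
  set Nv : (Fin n → F) → ℕ := fun v => (U.filter fun A => Bf q A v v = 0).card with hNv
  have hdc : ∑ v : Fin n → F, (Nv v : ℤ) = ∑ A ∈ U, (Zc q A ⊤ : ℤ) := by
    have h1 : ∀ v, (Nv v : ℤ) = ∑ A ∈ U, if Bf q A v v = 0 then (1:ℤ) else 0 := by
      intro v
      rw [hNv]
      push_cast
      rw [Finset.card_filter]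
      push_cast
      rfl
    have h2 : ∀ A, (Zc q A ⊤ : ℤ) = ∑ v : Fin n → F, if Bf q A v v = 0 then (1:ℤ) else 0 := by
      intro A
      have heq : (Finset.univ.filter fun v : Fin n → F =>
          v ∈ (⊤ : Submodule F (Fin n → F)) ∧ Bf q A v v = 0)
          = Finset.univ.filter fun v : Fin n → F => Bf q A v v = 0 := by
        ext v; simp
      rw [Zc, heq, Finset.card_filter]
      push_cast
      rfl
    simp only [h1, h2]
    exact Finset.sum_comm
  -- lower bound for each Nv
  have hlower : ∀ v : Fin n → F, (U.card : ℤ) ≤ (q : ℤ) * Nv v := by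
    intro v
    have hmaps : ∀ A ∈ U, Bf q A v v ∈ Finset.univ.filter (fun c : F => c ^ q = c) := by
      intro A hAU
      simp only [Finset.mem_filter]
      exact ⟨Finset.mem_univ _, Bf_conj hF hfrob (hherm A hAU) v v⟩
    have hfib := Finset.card_eq_sum_card_fiberwise hmaps
    have hfb : ∀ c ∈ Finset.univ.filter (fun c : F => c ^ q = c),
        (U.filter fun A => Bf q A v v = c).card ≤ Nv v := by
      intro c _
      rcases Finset.eq_empty_or_nonempty (U.filter fun A => Bf q A v v = c) with hem | ⟨A₁, hA₁⟩
      · rw [hem]; simp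
      simp only [Finset.mem_filter] at hA₁
      rw [hNv]
      apply Finset.card_le_card_of_injOn (fun A => A - A₁)
      · intro A hA
        simp only [Finset.mem_coe, Finset.mem_filter] at hA ⊢
        constructor
        · rw [sub_eq_add_neg]
          exact hadd A hA.1 (-A₁) (hneg A₁ hA₁.1)
        · rw [Bf_matrix_sub, hA.2, hA₁.2, sub_self]
      · intro x _ y _ hxy
        simpa using congrArg (fun M => M + A₁) hxy
    calc (U.card : ℤ) = ∑ c ∈ Finset.univ.filter (fun c : F => c ^ q = c),
          ((U.filter fun A => Bf q A v v = c).card : ℤ) := by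
          rw [hfib]; push_cast; rfl
      _ ≤ ∑ _c ∈ Finset.univ.filter (fun c : F => c ^ q = c), (Nv v : ℤ) := by
          apply Finset.sum_le_sum
          intro c hc
          exact_mod_cast hfb c hc
      _ = ((Finset.univ.filter (fun c : F => c ^ q = c)).card : ℤ) * Nv v := by
          rw [Finset.sum_const]; push_cast; ring
      _ ≤ (q : ℤ) * Nv v := by
          apply mul_le_mul_of_nonneg_right _ (Nat.cast_nonneg _)
          exact_mod_cast Ecard_le (F := F) hq2
  -- assemble
  set M : ℤ := (U.card : ℤ) with hM
  set X : ℤ := (q : ℤ) ^ (2 * n) with hX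
  set Y : ℤ := (q : ℤ) ^ (2 * n - k) with hY
  have hcardfun : (Fintype.card (Fin n → F) : ℤ) = X := by
    rw [Fintype.card_fun, hF, Fintype.card_fin, hX]
    push_cast [← pow_mul]
    ring_nf
  -- sum over U
  have hsumU : (q : ℤ) * ∑ A ∈ U, (Zc q A ⊤ : ℤ) = (q : ℤ) * X + (M - 1) * (X - ((q:ℤ) - 1) * Y) := by
    rw [Finset.mul_sum]
    rw [← Finset.add_sum_erase U _ hzero]
    have h0 : (q : ℤ) * (Zc q (0 : Matrix (Fin n) (Fin n) F) ⊤ : ℤ) = (q:ℤ) * X := by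
      rw [hZ0, hX]; push_cast; ring
    have hrest : ∑ A ∈ U.erase 0, (q : ℤ) * (Zc q A ⊤ : ℤ) = (M - 1) * (X - ((q:ℤ) - 1) * Y) := by
      have hcongr : ∀ A ∈ U.erase 0, (q : ℤ) * (Zc q A ⊤ : ℤ) = X - ((q:ℤ) - 1) * Y := by
        intro A hA
        obtain ⟨hA0, hAU⟩ := Finset.mem_erase.mp hA
        exact hZA A hAU hA0
      rw [Finset.sum_congr rfl hcongr, Finset.sum_const,
        Finset.card_erase_of_mem hzero, nsmul_eq_mul]
      have h1le : 1 ≤ U.card := by omega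
      have hMm : ((U.card - 1 : ℕ) : ℤ) = M - 1 := by
        rw [hM, Nat.cast_sub h1le]
        push_cast
        ring
      rw [hMm]
    rw [h0, hrest]
  -- lower bound on the sum over v
  have hNv0' : Nv 0 = U.card := by
    show (U.filter fun A => Bf q A 0 0 = 0).card = U.card
    rw [Finset.filter_true_of_mem (fun A _ => Bf_zero_left hq0 A 0)]
  have hNv0 : (Nv 0 : ℤ) = M := by rw [hNv0', hM]
  have hsumV : (q:ℤ) * M + (X - 1) * M ≤ (q : ℤ) * ∑ v : Fin n → F, (Nv v : ℤ) := by
    rw [Finset.mul_sum, ← Finset.add_sum_erase _ _ (Finset.mem_univ (0 : Fin n → F))]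
    have h0 : (q:ℤ) * (Nv 0 : ℤ) = q * M := by rw [hNv0]
    have hrest : (X - 1) * M ≤ ∑ v ∈ Finset.univ.erase (0 : Fin n → F), (q : ℤ) * (Nv v : ℤ) := by
      calc (X - 1) * M = ∑ _v ∈ Finset.univ.erase (0 : Fin n → F), M := by
            have h1 : 1 ≤ Fintype.card (Fin n → F) := Fintype.card_pos
            rw [Finset.sum_const, Finset.card_erase_of_mem (Finset.mem_univ _),
              Finset.card_univ, nsmul_eq_mul, Nat.cast_sub h1, hcardfun]
            push_cast
            ring
        _ ≤ _ := Finset.sum_le_sum fun v _ => hlower v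
    rw [h0]
    omega
  -- the master inequality
  have hD : (q:ℤ) * M + (X - 1) * M ≤ (q:ℤ) * X + (M - 1) * (X - ((q:ℤ)-1) * Y) := by
    calc (q:ℤ) * M + (X - 1) * M ≤ (q : ℤ) * ∑ v : Fin n → F, (Nv v : ℤ) := hsumV
      _ = (q : ℤ) * ∑ A ∈ U, (Zc q A ⊤ : ℤ) := by rw [hdc]
      _ = (q:ℤ) * X + (M - 1) * (X - ((q:ℤ)-1) * Y) := hsumU
  -- final contradiction
  by_contra hcon
  push_neg at hcon
  have hMk : ((q:ℤ) ^ k) + 1 ≤ M := by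
    rw [hM]
    exact_mod_cast hcon
  have hq1 : (0:ℤ) < (q:ℤ) - 1 := by
    have : (2:ℤ) ≤ q := by exact_mod_cast hq2
    omega
  have hE : ((q:ℤ) - 1) * (M + (M - 1) * Y) ≤ ((q:ℤ) - 1) * X := by nlinarith [hD]
  have hstep1 : M + (M - 1) * Y ≤ X := le_of_mul_le_mul_left hE hq1
  have hpowid : (q:ℤ) ^ k * Y = X := by
    rw [hY, hX, ← pow_add]
    congr 1
    omega
  have hYpos : (0:ℤ) < Y := by rw [hY]; positivity
  have hXY : X ≤ (M - 1) * Y := by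
    rw [← hpowid]
    apply mul_le_mul_of_nonneg_right _ (le_of_lt hYpos)
    linarith
  have hqk1 : (1:ℤ) ≤ (q:ℤ)^k := one_le_pow₀ (by omega)
  linarith

end Final
end

section
/- Suppose U is a partial spread set in S_n(F_q) (i.e. a set of symmetric matrices all of whose pairwise differences and nonzero elements are invertible) which is additionally closed under F_p-linear combinations and has |U| = q^n. If A ∈ H_n(F_{q^2}) is such that det(A - B) ≠ 0 for all B ∈ U, then A ∈ U. -/
open Matrix

private lemma pow_pow_fixed {R : Type} [Monoid R] {p : ℕ} {x : R} (h : x ^ p = x) (e : ℕ) :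
    x ^ p ^ e = x := by
  induction e with
  | zero => rw [pow_zero, pow_one]
  | succ k ih => rw [pow_succ, pow_mul, ih, h]

set_option maxHeartbeats 2000000 in
/-- Key lemma: given hermitian matrices `G k` indexed by `Option (Fin (n*e))`, there is a
nontrivial `F_p`-linear combination with zero determinant (a Chevalley–Warning argument,
using that determinants of hermitian matrices lie in the fixed field of `x ↦ x ^ p ^ e`,
an `F_p`-space of dimension at most `e`). -/
private theorem herm_aux (p e n : ℕ) [hfp : Fact p.Prime] (he : 0 < e) (hn : 0 < n)
    (F : Type) [Field F] [Fintype F] [CharP F p] [Algebra (ZMod p) F]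
    (G : Option (Fin (n * e)) → Matrix (Fin n) (Fin n) F)
    (hherm : ∀ k, ((G k).map (fun a => a ^ p ^ e))ᵀ = G k) :
    ∃ x : Option (Fin (n * e)) → ZMod p, x ≠ 0 ∧
      (∑ k, algebraMap (ZMod p) F (x k) • G k).det = 0 := by
  classical
  haveI : Nonempty (Fin n) := ⟨⟨0, hn⟩⟩
  set q := p ^ e with hq
  have hp2 : 2 ≤ p := hfp.out.two_le
  have hq2 : 2 ≤ q := by
    have h1 : p ^ 1 ≤ p ^ e := Nat.pow_le_pow_right (by omega) he
    rw [pow_one] at h1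
    omega
  -- the `q`-power Frobenius, as a ring hom
  let φ : F →+* F := iterateFrobenius F p e
  have hφ : ∀ z : F, φ z = z ^ q := fun z => rfl
  -- elements of the prime field are fixed by `φ`
  have hfix : ∀ c : ZMod p, (algebraMap (ZMod p) F c) ^ q = algebraMap (ZMod p) F c := by
    intro c
    have h1 : (algebraMap (ZMod p) F c) ^ p = algebraMap (ZMod p) F c := by
      rw [← map_pow, ZMod.pow_card]
    exact pow_pow_fixed h1 e
  -- the subfield `F_q` as an `F_p`-subspace
  let K : Submodule (ZMod p) F :=
    { carrier := {z : F | z ^ q = z}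
      add_mem' := by
        intro a b ha hb
        have ha' : a ^ q = a := ha
        have hb' : b ^ q = b := hb
        show (a + b) ^ q = a + b
        rw [hq, add_pow_char_pow, ← hq, ha', hb']
      zero_mem' := by
        show (0 : F) ^ q = 0
        exact zero_pow (by omega)
      smul_mem' := by
        intro c z hz
        have hz' : z ^ q = z := hz
        show (c • z) ^ q = c • z
        rw [Algebra.smul_def, mul_pow, hfix, hz'] }
  have hKmem : ∀ z : F, z ∈ K ↔ z ^ q = z := fun z => Iff.rfl
  -- `K` has at most `q` elements
  have hcardK : Fintype.card K ≤ q := by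
    let f : Polynomial F := Polynomial.X ^ q - Polynomial.X
    have hfm : f.Monic := Polynomial.monic_X_pow_sub (by
      rw [Polynomial.degree_X]
      exact_mod_cast (by omega : 1 < q))
    have hsubset : Finset.univ.filter (fun z : F => z ∈ K) ⊆ f.roots.toFinset := by
      intro z hz
      simp only [Finset.mem_filter] at hz
      rw [Multiset.mem_toFinset, Polynomial.mem_roots hfm.ne_zero]
      have hz' : z ^ q = z := hz.2
      show f.IsRoot z
      simp only [f, Polynomial.IsRoot, Polynomial.eval_sub, Polynomial.eval_pow,
        Polynomial.eval_X]
      rw [hz', sub_self]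
    have h1 : Fintype.card K = (Finset.univ.filter (fun z : F => z ∈ K)).card :=
      Fintype.card_subtype _
    have h2 : f.roots.toFinset.card ≤ Multiset.card f.roots := Multiset.toFinset_card_le _
    have h3 : Multiset.card f.roots ≤ f.natDegree := Polynomial.card_roots' f
    have h4 : f.natDegree ≤ q := by
      refine le_trans (Polynomial.natDegree_sub_le _ _) ?_
      simp [Polynomial.natDegree_X_pow, Polynomial.natDegree_X]
      omega
    exact le_trans (le_trans (h1 ▸ Finset.card_le_card hsubset) h2) (le_trans h3 h4)
  -- `K` has `F_p`-dimension at most `e`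
  have hrkK : Module.finrank (ZMod p) K ≤ e := by
    have h1 : Fintype.card K = p ^ Module.finrank (ZMod p) K := by
      have h := Module.card_eq_pow_finrank (K := ZMod p) (V := K)
      rwa [ZMod.card] at h
    by_contra hlt
    push_neg at hlt
    have h2 : q < Fintype.card K := by
      rw [h1, hq]
      exact Nat.pow_lt_pow_right (by omega) hlt
    omega
  -- an injective-on-`K` linear functional system `g : F → (Fin e → F_p)`
  set d := Module.finrank (ZMod p) K with hd
  let bK : Module.Basis (Fin d) (ZMod p) K := Module.finBasis (ZMod p) K
  let pad : (Fin d →₀ ZMod p) →ₗ[ZMod p] (Fin e → ZMod p) :=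
    { toFun := fun v => fun j => if h : (j : ℕ) < d then v ⟨j, h⟩ else 0
      map_add' := by intro a b; funext j; by_cases h : (j : ℕ) < d <;> simp [h]
      map_smul' := by intro c a; funext j; by_cases h : (j : ℕ) < d <;> simp [h] }
  let f0 : K →ₗ[ZMod p] (Fin e → ZMod p) := pad ∘ₗ (bK.repr : K →ₗ[ZMod p] (Fin d →₀ ZMod p))
  have hf0 : ∀ z : K, f0 z = 0 → z = 0 := by
    intro z hz
    have h2 : ∀ i : Fin d, bK.repr z i = 0 := by
      intro i
      have h3 := congrFun hz ⟨(i : ℕ), lt_of_lt_of_le i.isLt hrkK⟩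
      simpa [f0, pad, i.isLt] using h3
    have h4 : bK.repr z = 0 := Finsupp.ext h2
    exact (LinearEquiv.map_eq_zero_iff bK.repr).mp h4
  obtain ⟨g, hg⟩ := LinearMap.exists_extend f0
  -- the determinant polynomial
  let σT := Option (Fin (n * e))
  let N : Matrix (Fin n) (Fin n) (MvPolynomial σT F) :=
    Matrix.of fun i j => ∑ k : σT, MvPolynomial.C (G k i j) * MvPolynomial.X k
  let P : MvPolynomial σT F := N.det
  have hPeval : ∀ y : σT → F, MvPolynomial.eval y P = (∑ k, y k • G k).det := by
    intro y
    rw [show MvPolynomial.eval y P = (N.map (MvPolynomial.eval y)).det from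
      RingHom.map_det (MvPolynomial.eval y) N]
    congr 1
    ext i j
    rw [Matrix.map_apply, Matrix.sum_apply]
    show MvPolynomial.eval y (∑ k : σT, MvPolynomial.C (G k i j) * MvPolynomial.X k) = _
    rw [map_sum]
    refine Finset.sum_congr rfl fun k _ => ?_
    rw [_root_.map_mul, MvPolynomial.eval_C, MvPolynomial.eval_X, Matrix.smul_apply, smul_eq_mul,
      mul_comm]
  have hNdeg : ∀ i j, (N i j).totalDegree ≤ 1 := by
    intro i j
    show (∑ k : σT, MvPolynomial.C (G k i j) * MvPolynomial.X k).totalDegree ≤ 1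
    refine le_trans (MvPolynomial.totalDegree_finset_sum _ _) ?_
    refine Finset.sup_le fun k _ => ?_
    refine le_trans (MvPolynomial.totalDegree_mul _ _) ?_
    simp [MvPolynomial.totalDegree_C, MvPolynomial.totalDegree_X]
  have hPdeg : P.totalDegree ≤ n := by
    rw [show P = N.det from rfl, Matrix.det_apply]
    refine le_trans (MvPolynomial.totalDegree_finset_sum _ _) ?_
    refine Finset.sup_le fun π _ => ?_
    refine le_trans (MvPolynomial.totalDegree_smul_le _ _) ?_
    refine le_trans (MvPolynomial.totalDegree_finset_prod _ _) ?_
    calc ∑ i, (N (π i) i).totalDegree ≤ ∑ _i : Fin n, 1 :=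
          Finset.sum_le_sum fun i _ => hNdeg _ _
      _ = n := by simp
  -- the coordinate polynomials over `F_p`
  let Q : Fin e → MvPolynomial σT (ZMod p) := fun j =>
    ∑ T ∈ P.support, MvPolynomial.monomial T (g (MvPolynomial.coeff T P) j)
  have hQdeg : ∀ j, (Q j).totalDegree ≤ n := by
    intro j
    refine le_trans (MvPolynomial.totalDegree_finset_sum _ _) ?_
    refine Finset.sup_le fun T hT => ?_
    refine le_trans (MvPolynomial.totalDegree_monomial_le _ _) ?_
    exact le_trans (le_of_eq rfl) (le_trans (MvPolynomial.le_totalDegree hT) hPdeg)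
  have hQeval : ∀ (x : σT → ZMod p) (j : Fin e),
      MvPolynomial.eval x (Q j)
        = g (MvPolynomial.eval (fun k => algebraMap (ZMod p) F (x k)) P) j := by
    intro x j
    have h2 : MvPolynomial.eval (fun k => algebraMap (ZMod p) F (x k)) P
        = ∑ T ∈ P.support, (∏ k, (x k) ^ T k) • MvPolynomial.coeff T P := by
      rw [MvPolynomial.eval_eq']
      refine Finset.sum_congr rfl fun T _ => ?_
      rw [Algebra.smul_def, map_prod]
      simp only [map_pow]
      rw [mul_comm]
    rw [h2, map_sum g, Finset.sum_apply]
    show MvPolynomial.eval x (∑ T ∈ P.support, MvPolynomial.monomial T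
      (g (MvPolynomial.coeff T P) j)) = _
    rw [map_sum]
    refine Finset.sum_congr rfl fun T hT => ?_
    rw [MvPolynomial.eval_monomial, Finsupp.prod_pow, _root_.map_smul g, Pi.smul_apply, smul_eq_mul,
      mul_comm]
  -- Chevalley–Warning
  have hlt : (∑ j : Fin e, (Q j).totalDegree) < Fintype.card σT := by
    have h1 : (∑ j : Fin e, (Q j).totalDegree) ≤ e * n := by
      calc (∑ j : Fin e, (Q j).totalDegree) ≤ ∑ _j : Fin e, n :=
            Finset.sum_le_sum fun j _ => hQdeg j
        _ = e * n := by simp [mul_comm]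
    have h2 : Fintype.card σT = n * e + 1 := by
      simp [σT]
    rw [h2, mul_comm n e]
    omega
  have hdvd := char_dvd_card_solutions_of_fintype_sum_lt p hlt
  -- `0` is a solution
  have hy0 : ∀ j, MvPolynomial.eval (0 : σT → ZMod p) (Q j) = 0 := by
    intro j
    rw [hQeval]
    have h1 : (fun k : σT => algebraMap (ZMod p) F ((0 : σT → ZMod p) k))
        = fun _ => (0 : F) := by funext k; simp
    rw [h1, hPeval]
    have h2 : (∑ k : σT, (0 : F) • G k) = 0 := by simp
    rw [h2, Matrix.det_zero, map_zero g]
    rfl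
  -- extract a nonzero solution
  have hcard_pos : 0 < Fintype.card {x : σT → ZMod p // ∀ j, MvPolynomial.eval x (Q j) = 0} :=
    Fintype.card_pos_iff.mpr ⟨⟨0, hy0⟩⟩
  have h1lt : 1 < Fintype.card {x : σT → ZMod p // ∀ j, MvPolynomial.eval x (Q j) = 0} := by
    have h2 : p ∣ Fintype.card {x : σT → ZMod p // ∀ j, MvPolynomial.eval x (Q j) = 0} := by
      convert hdvd using 2
    have h3 := Nat.le_of_dvd hcard_pos h2
    omega
  obtain ⟨⟨x, hx⟩, hne⟩ := Fintype.exists_ne_of_one_lt_card h1lt ⟨0, hy0⟩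
  refine ⟨x, fun h0 => hne (Subtype.ext h0), ?_⟩
  set M := ∑ k, algebraMap (ZMod p) F (x k) • G k with hM
  -- `M` is hermitian
  have hGent : ∀ k (i j : Fin n), (G k j i) ^ q = G k i j := by
    intro k i j
    conv_rhs => rw [← hherm k]
    rfl
  have hMent : ∀ i j, φ (M j i) = M i j := by
    intro i j
    have h1 : M j i = ∑ k, algebraMap (ZMod p) F (x k) * G k j i := by
      rw [hM, Matrix.sum_apply]
      refine Finset.sum_congr rfl fun k _ => ?_
      rw [Matrix.smul_apply, smul_eq_mul]
    have h2 : M i j = ∑ k, algebraMap (ZMod p) F (x k) * G k i j := by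
      rw [hM, Matrix.sum_apply]
      refine Finset.sum_congr rfl fun k _ => ?_
      rw [Matrix.smul_apply, smul_eq_mul]
    rw [h1, h2, map_sum]
    refine Finset.sum_congr rfl fun k _ => ?_
    rw [_root_.map_mul]
    congr 1
    · rw [hφ]
      exact hfix _
    · rw [hφ]
      exact hGent k i j
  have hdetK : M.det ∈ K := by
    rw [hKmem]
    have h3 : M.map (fun a => a ^ q) = Mᵀ := by
      ext i j
      rw [Matrix.map_apply, Matrix.transpose_apply, ← hMent j i, hφ]
    calc M.det ^ q = φ M.det := (hφ _).symm
      _ = (M.map φ).det := RingHom.map_det φ M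
      _ = (M.map (fun a => a ^ q)).det := by
          have hcoe : ⇑φ = fun a : F => a ^ q := funext hφ
          rw [hcoe]
      _ = Mᵀ.det := by rw [h3]
      _ = M.det := Matrix.det_transpose M
  -- all coordinates of `det M` vanish, so `det M = 0`
  have hgd : g M.det = 0 := by
    funext j
    have h1 := hx j
    rw [hQeval, hPeval] at h1
    exact h1
  have hz : f0 ⟨M.det, hdetK⟩ = 0 := by
    rw [← hg]
    show g (K.subtype ⟨M.det, hdetK⟩) = 0
    exact hgd
  have h2 := hf0 _ hz
  exact congrArg Subtype.val h2


/-- Let `U` be an `F_p`-linear partial spread set of symmetric matrices with entries in the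
subfield `F_q` of `F_{q^2}`, of size `q^n`. Then `U` is maximal as a partial spread set of
hermitian matrices: any hermitian `A` with `det(A - B) ≠ 0` for all `B ∈ U` lies in `U`. -/
theorem stmt13 (p e n q : ℕ) (hp : p.Prime) (he : 0 < e) (hq : q = p ^ e)
    (F : Type) [Field F] [Fintype F] (hF : Fintype.card F = q ^ 2)
    (U : Finset (Matrix (Fin n) (Fin n) F))
    (hsub : ∀ B ∈ U, ∀ i j, (B i j) ^ q = B i j)
    (hsymm : ∀ B ∈ U, Bᵀ = B)
    (hinv : ∀ B ∈ U, B ≠ 0 → B.det ≠ 0)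
    (hdiff : ∀ B ∈ U, ∀ C ∈ U, B ≠ C → (B - C).det ≠ 0)
    (hzero : (0 : Matrix (Fin n) (Fin n) F) ∈ U)
    (hadd : ∀ B ∈ U, ∀ C ∈ U, B + C ∈ U)
    (hneg : ∀ B ∈ U, -B ∈ U)
    (hcard : U.card = q ^ n)
    (A : Matrix (Fin n) (Fin n) F) (hAherm : A = (A.map (fun x => x ^ q))ᵀ)
    (hA : ∀ B ∈ U, (A - B).det ≠ 0) :
    A ∈ U := by
  classical
  subst hq
  by_cases hn0 : n = 0
  · subst hn0
    have hA0 : A = 0 := by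
      ext i j
      exact i.elim0
    rw [hA0]
    exact hzero
  have hn : 0 < n := Nat.pos_of_ne_zero hn0
  haveI hfp : Fact p.Prime := ⟨hp⟩
  -- `F` has characteristic `p`
  haveI hFp : CharP F p := by
    obtain ⟨m, hm1, hm2⟩ := FiniteField.card F (ringChar F)
    have h0 : ringChar F ^ (m : ℕ) = (p ^ e) ^ 2 := hm2.symm.trans hF
    have h1 : p ∣ ringChar F ^ (m : ℕ) := by
      rw [h0]
      exact dvd_pow (dvd_pow_self p he.ne') (by norm_num)
    have h2 : p ∣ ringChar F := hp.dvd_of_dvd_pow h1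
    have h3 : p = ringChar F := (Nat.prime_dvd_prime_iff_eq hp hm1).mp h2
    rw [h3]
    exact ringChar.charP F
  letI : Algebra (ZMod p) F := ZMod.algebra F p
  haveI : NeZero p := ⟨hp.pos.ne'⟩
  -- closure of `U` under natural and `ZMod p` scalar multiples
  have hns : ∀ B ∈ U, ∀ k : ℕ, k • B ∈ U := by
    intro B hB k
    induction k with
    | zero => simpa using hzero
    | succ k ih => rw [succ_nsmul]; exact hadd _ ih _ hB
  have hzsmul : ∀ B ∈ U, ∀ c : ZMod p, c • B ∈ U := by
    intro B hB c
    obtain ⟨k, rfl⟩ := ZMod.natCast_rightInverse.surjective c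
    rw [Nat.cast_smul_eq_nsmul]
    exact hns B hB k
  -- `U` as a `ZMod p`-submodule
  let U' : Submodule (ZMod p) (Matrix (Fin n) (Fin n) F) :=
    { carrier := ↑U
      add_mem' := fun {a b} ha hb => hadd a ha b hb
      zero_mem' := hzero
      smul_mem' := fun c x hx => hzsmul x hx c }
  have hU'mem : ∀ x, x ∈ U' ↔ x ∈ U := fun x => Iff.rfl
  haveI : Fintype U' := Fintype.ofFinset U fun x => (hU'mem x).symm
  have hcardU' : Fintype.card U' = p ^ (n * e) := by
    have h1 : Fintype.card U' = U.card := by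
      rw [← Fintype.card_coe U]
      exact Fintype.card_congr (Equiv.subtypeEquivRight fun x => hU'mem x)
    rw [h1, hcard, ← pow_mul, mul_comm e n]
  have hfr : Module.finrank (ZMod p) U' = n * e := by
    have h1 := Module.card_eq_pow_finrank (K := ZMod p) (V := U')
    rw [ZMod.card, hcardU'] at h1
    exact (Nat.pow_right_injective hp.two_le h1).symm
  let b : Module.Basis (Fin (n * e)) (ZMod p) U' := Module.finBasisOfFinrankEq (ZMod p) U' hfr
  let Bfam : Fin (n * e) → Matrix (Fin n) (Fin n) F := fun i => (b i : Matrix (Fin n) (Fin n) F)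
  have hBmem : ∀ i, Bfam i ∈ U := fun i => (b i).2
  have hcoesum : ∀ c : Fin (n * e) → ZMod p,
      (∑ i, c i • Bfam i) = ((∑ i, c i • b i : U') : Matrix (Fin n) (Fin n) F) := by
    intro c
    rw [Submodule.coe_sum]
    exact Finset.sum_congr rfl fun i _ => rfl
  have hsummem : ∀ c : Fin (n * e) → ZMod p, (∑ i, c i • Bfam i) ∈ U := by
    intro c
    rw [hcoesum]
    exact (∑ i, c i • b i : U').2
  have hindep : ∀ c : Fin (n * e) → ZMod p, (∑ i, c i • Bfam i) = 0 → ∀ i, c i = 0 := by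
    intro c hc
    have h1 : (∑ i, c i • b i : U') = 0 := by
      apply Subtype.ext
      rw [← hcoesum c, hc]
      rfl
    exact Fintype.linearIndependent_iff.mp b.linearIndependent c h1
  -- hermitian structure
  have hermB : ∀ Bm ∈ U, ((Bm : Matrix (Fin n) (Fin n) F).map (fun a => a ^ p ^ e))ᵀ = Bm := by
    intro Bm hB
    ext i j
    rw [Matrix.transpose_apply, Matrix.map_apply, hsub _ hB]
    conv_rhs => rw [← hsymm _ hB]
    rfl
  -- apply the key lemma
  obtain ⟨x, hx0, hxdet⟩ := herm_aux p e n he hn F (fun k => k.elim A Bfam) (by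
    intro k
    cases k with
    | none => exact hAherm.symm
    | some i => exact hermB _ (hBmem i))
  rw [Fintype.sum_option] at hxdet
  have hxdet' : (algebraMap (ZMod p) F (x none) • A
      + ∑ i, algebraMap (ZMod p) F (x (some i)) • Bfam i).det = 0 := hxdet
  exfalso
  set c := x none with hc
  by_cases hcz : c = 0
  · have hS : (algebraMap (ZMod p) F c • A + ∑ i, algebraMap (ZMod p) F (x (some i)) • Bfam i)
        = ∑ i, (x (some i)) • Bfam i := by
      rw [hcz, map_zero, zero_smul, zero_add]
      exact Finset.sum_congr rfl fun i _ => algebraMap_smul F _ _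
    rw [hS] at hxdet'
    by_cases hS0 : (∑ i, (x (some i)) • Bfam i) = 0
    · apply hx0
      funext k
      cases k with
      | none => exact hcz
      | some i => exact hindep _ hS0 i
    · exact hinv _ (hsummem _) hS0 hxdet'
  · set B0 : Matrix (Fin n) (Fin n) F := ∑ i, ((-c⁻¹) * x (some i)) • Bfam i with hB0
    have hB0U : B0 ∈ U := hsummem _
    have hMeq : algebraMap (ZMod p) F c • (A - B0)
        = algebraMap (ZMod p) F c • A + ∑ i, algebraMap (ZMod p) F (x (some i)) • Bfam i := by
      rw [smul_sub, sub_eq_add_neg]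
      congr 1
      rw [hB0, Finset.smul_sum, ← Finset.sum_neg_distrib]
      refine Finset.sum_congr rfl fun i _ => ?_
      rw [← algebraMap_smul F ((-c⁻¹) * x (some i)) (Bfam i), smul_smul, ← _root_.map_mul]
      have harith : c * (-c⁻¹ * x (some i)) = -(x (some i)) := by
        field_simp
      rw [harith, map_neg, neg_smul, neg_neg]
    have hdetne : (algebraMap (ZMod p) F c • (A - B0)).det ≠ 0 := by
      rw [Matrix.det_smul]
      apply mul_ne_zero
      · apply pow_ne_zero
        intro h
        exact hcz ((algebraMap (ZMod p) F).injective (by rw [h, map_zero]))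
      · exact hA B0 hB0U
    exact hdetne (hMeq ▸ hxdet')
end

section
/- For each integer δ with 1 ≤ δ ≤ q, and each subset Δ of F_q of size δ containing 0, choose μ ∈ F_q such that x² + y² + (μ-2)xy = 0 has only the trivial solution over F_q. Then the set U_δ consisting of the matrices [[a,a],[a,0]] and [[0,a],[a,μa]] for a ∈ Δ, together with [[0,α],[ᾱ,0]] for α ∈ F_{q^2} \ Δ, is a set of 2×2 hermitian matrices over F_{q^2} of size q² + δ - 1 in which all pairwise differences of distinct elements are invertible. -/
open Matrix

/-- The partial spread set `U_δ` of `2 × 2` hermitian matrices over `F_{q^2}`: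
matrices `[[a,a],[a,0]]` and `[[0,a],[a,μa]]` for `a ∈ Δ`, together with
`[[0,α],[ᾱ,0]]` for `α ∉ Δ`. -/
def Udelta {F : Type} [Field F] (q : ℕ) (Δ : Finset F) (μ : F) :
    Set (Matrix (Fin 2) (Fin 2) F) :=
  {M | (∃ a ∈ Δ, M = !![a, a; a, 0]) ∨ (∃ a ∈ Δ, M = !![0, a; a, μ * a]) ∨
    (∃ α : F, α ∉ Δ ∧ M = !![0, α; α ^ q, 0])}

/-- `U_δ` consists of hermitian matrices, has size `q² + δ - 1`, and all differences of
distinct elements are invertible (it is a partial spread set in `H_2(F_{q^2})`). -/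
theorem stmt14 (q δ : ℕ) (hq : ∃ (p e : ℕ), p.Prime ∧ 0 < e ∧ q = p ^ e)
    (hδ1 : 1 ≤ δ) (hδq : δ ≤ q)
    (F : Type) [Field F] [Fintype F] (hF : Fintype.card F = q ^ 2)
    (Δ : Finset F) (hΔsub : ∀ x ∈ Δ, x ^ q = x) (hΔ0 : (0 : F) ∈ Δ) (hΔcard : Δ.card = δ)
    (μ : F) (hμsub : μ ^ q = μ)
    (hμ : ∀ x y : F, x ^ q = x → y ^ q = y →
      x ^ 2 + y ^ 2 + (μ - 2) * x * y = 0 → x = 0 ∧ y = 0) :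
    (∀ M ∈ Udelta q Δ μ, M = (M.map (fun x => x ^ q))ᵀ) ∧
    (Udelta q Δ μ).ncard = q ^ 2 + δ - 1 ∧
    (∀ M ∈ Udelta q Δ μ, ∀ N ∈ Udelta q Δ μ, M ≠ N → (M - N).det ≠ 0) := by
  classical
  -- basic facts
  have hq1 : 1 ≤ q := by
    obtain ⟨p, e, hp, he, rfl⟩ := hq
    exact Nat.one_le_pow _ _ hp.pos
  have hfrob2 : ∀ x : F, (x ^ q) ^ q = x := by
    intro x
    rw [← pow_mul, ← sq, ← hF]
    exact FiniteField.pow_card x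
  have hq0 : q ≠ 0 := by omega
  constructor
  · -- hermitian
    rintro M (⟨a, ha, rfl⟩ | ⟨a, ha, rfl⟩ | ⟨α, hα, rfl⟩)
    · have h := hΔsub a ha
      ext i j
      fin_cases i <;> fin_cases j <;> simp [h, zero_pow hq0]
    · have h := hΔsub a ha
      ext i j
      fin_cases i <;> fin_cases j <;> simp [h, hμsub, mul_pow, zero_pow hq0]
    · ext i j
      fin_cases i <;> fin_cases j <;> simp [hfrob2, zero_pow hq0]
  constructor
  · -- cardinality
    set f1 : F → Matrix (Fin 2) (Fin 2) F := fun a => !![a, a; a, 0] with hf1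
    set f2 : F → Matrix (Fin 2) (Fin 2) F := fun a => !![0, a; a, μ * a] with hf2
    set f3 : F → Matrix (Fin 2) (Fin 2) F := fun α => !![0, α; α ^ q, 0] with hf3
    have hset : Udelta q Δ μ =
        ↑(Δ.image f1 ∪ (Δ.erase 0).image f2 ∪ Δᶜ.image f3) := by
      ext M
      simp only [Udelta, Set.mem_setOf_eq, Finset.coe_union, Set.mem_union,
        Finset.coe_image, Set.mem_image, Finset.mem_coe, Finset.mem_erase,
        Finset.mem_compl]
      constructor
      · rintro (⟨a, ha, rfl⟩ | ⟨a, ha, rfl⟩ | ⟨α, hα, rfl⟩)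
        · exact Or.inl (Or.inl ⟨a, ha, rfl⟩)
        · by_cases h0 : a = 0
          · subst h0
            refine Or.inl (Or.inl ⟨0, hΔ0, ?_⟩)
            simp [f1, f2]
          · exact Or.inl (Or.inr ⟨a, ⟨h0, ha⟩, rfl⟩)
        · exact Or.inr ⟨α, hα, rfl⟩
      · rintro ((⟨a, ha, rfl⟩ | ⟨a, ⟨h0, ha⟩, rfl⟩) | ⟨α, hα, rfl⟩)
        · exact Or.inl ⟨a, ha, rfl⟩
        · exact Or.inr (Or.inl ⟨a, ha, rfl⟩)
        · exact Or.inr (Or.inr ⟨α, hα, rfl⟩)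
    rw [hset, Set.ncard_coe_finset]
    have hinj1 : Set.InjOn f1 ↑Δ := by
      intro a _ b _ h
      simpa [f1] using congrFun (congrFun h 0) 0
    have hinj2 : Set.InjOn f2 ↑(Δ.erase 0) := by
      intro a _ b _ h
      simpa [f2] using congrFun (congrFun h 0) 1
    have hinj3 : Set.InjOn f3 ↑(Δᶜ) := by
      intro a _ b _ h
      simpa [f3] using congrFun (congrFun h 0) 1
    have hd12 : Disjoint (Δ.image f1) ((Δ.erase 0).image f2) := by
      rw [Finset.disjoint_left]
      rintro M hM1 hM2
      obtain ⟨a, ha, rfl⟩ := Finset.mem_image.mp hM1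
      obtain ⟨b, hb, heq⟩ := Finset.mem_image.mp hM2
      have h00 : b = a := by simpa [f1, f2] using congrFun (congrFun heq 0) 1
      have h01 : (0 : F) = a := by simpa [f1, f2] using congrFun (congrFun heq 0) 0
      exact (Finset.mem_erase.mp hb).1 (h00.trans h01.symm)
    have hd3 : Disjoint (Δ.image f1 ∪ (Δ.erase 0).image f2) (Δᶜ.image f3) := by
      rw [Finset.disjoint_left]
      rintro M hM1 hM3
      obtain ⟨α, hα, heq⟩ := Finset.mem_image.mp hM3
      have hαΔ : α ∉ Δ := Finset.mem_compl.mp hα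
      rcases Finset.mem_union.mp hM1 with h | h
      · obtain ⟨a, ha, rfl⟩ := Finset.mem_image.mp h
        have h00 : (0 : F) = a := by simpa [f1, f3] using congrFun (congrFun heq 0) 0
        have h01 : α = a := by simpa [f1, f3] using congrFun (congrFun heq 0) 1
        exact hαΔ (h01 ▸ ha)
      · obtain ⟨a, ha, rfl⟩ := Finset.mem_image.mp h
        have h01 : α = a := by simpa [f2, f3] using congrFun (congrFun heq 0) 1
        exact hαΔ (h01 ▸ (Finset.mem_erase.mp ha).2)
    rw [Finset.card_union_of_disjoint hd3, Finset.card_union_of_disjoint hd12,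
      Finset.card_image_of_injOn hinj1, Finset.card_image_of_injOn hinj2,
      Finset.card_image_of_injOn hinj3, Finset.card_erase_of_mem hΔ0,
      Finset.card_compl, hF, hΔcard]
    have : δ ≤ q ^ 2 := le_trans hδq (by nlinarith)
    omega
  · -- differences invertible
    have detsymm : ∀ M N : Matrix (Fin 2) (Fin 2) F, (M - N).det = (N - M).det := by
      intro M N; rw [← neg_sub, Matrix.det_neg]; simp
    -- key sub-proofs
    have keyAA : ∀ a b : F, a ≠ b → (!![a,a;a,0] - !![b,b;b,(0:F)]).det ≠ 0 := by
      intro a b hab h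
      rw [Matrix.det_fin_two] at h
      simp [Matrix.sub_apply, sub_eq_zero] at h
      exact hab h
    have keyBB : ∀ a b : F, a ≠ b → (!![0,a;a,μ*a] - !![0,b;b,μ*b]).det ≠ 0 := by
      intro a b hab h
      rw [Matrix.det_fin_two] at h
      simp [Matrix.sub_apply, sub_eq_zero] at h
      exact hab h
    have keyCC : ∀ α β : F, α ≠ β → (!![0,α;α^q,0] - !![0,β;β^q,(0:F)]).det ≠ 0 := by
      intro α β hab h
      rw [Matrix.det_fin_two] at h
      simp [Matrix.sub_apply, sub_eq_zero] at h
      rcases h with h | h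
      · exact hab h
      · exact hab (by rw [← hfrob2 α, h, hfrob2])
    have keyAB : ∀ a b : F, a ∈ Δ → b ∈ Δ → ¬(a = 0 ∧ b = 0) →
        (!![a,a;a,0] - !![0,b;b,μ*b]).det ≠ 0 := by
      intro a b ha hb hne h
      rw [Matrix.det_fin_two] at h
      simp [Matrix.sub_apply] at h
      apply hne
      apply hμ a b (hΔsub a ha) (hΔsub b hb)
      linear_combination -h
    have keyAC : ∀ (a α : F), a ∈ Δ → α ∉ Δ →
        (!![a,a;a,0] - !![0,α;α^q,0]).det ≠ 0 := by
      intro a α ha hα h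
      rw [Matrix.det_fin_two] at h
      simp [Matrix.sub_apply, sub_eq_zero] at h
      rcases h with h | h
      · exact hα (h ▸ ha)
      · have hαa : α = a := by rw [← hfrob2 α, ← h, hΔsub a ha]
        exact hα (hαa ▸ ha)
    have keyBC : ∀ (a α : F), a ∈ Δ → α ∉ Δ →
        (!![0,a;a,μ*a] - !![0,α;α^q,0]).det ≠ 0 := by
      intro a α ha hα h
      rw [Matrix.det_fin_two] at h
      simp [Matrix.sub_apply, sub_eq_zero] at h
      rcases h with h | h
      · exact hα (h ▸ ha)
      · have hαa : α = a := by rw [← hfrob2 α, ← h, hΔsub a ha]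
        exact hα (hαa ▸ ha)
    rintro M hM N hN hMN
    rcases hM with ⟨a, ha, rfl⟩ | ⟨a, ha, rfl⟩ | ⟨α, hα, rfl⟩ <;>
      rcases hN with ⟨b, hb, rfl⟩ | ⟨b, hb, rfl⟩ | ⟨β, hβ, rfl⟩
    · exact keyAA a b (fun h => hMN (by rw [h]))
    · exact keyAB a b ha hb (fun ⟨h1, h2⟩ => hMN (by subst h1; subst h2; norm_num))
    · exact keyAC a β ha hβ
    · rw [detsymm]
      exact keyAB b a hb ha (fun ⟨h1, h2⟩ => hMN (by subst h1; subst h2; norm_num))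
    · exact keyBB a b (fun h => hMN (by rw [h]))
    · exact keyBC a β ha hβ
    · rw [detsymm]; exact keyAC b α hb hα
    · rw [detsymm]; exact keyBC b α hb hα
    · exact keyCC α β (fun h => hMN (by rw [h]))
end

section
/- With U_δ as constructed (δ ≥ 1, Δ ⊆ F_q containing 0 with |Δ| = δ ≤ q, μ making x²+y²+(μ-2)xy anisotropic), U_δ is a maximal partial spread set: there is no hermitian 2×2 matrix A ∉ U_δ such that A - B is invertible for all B ∈ U_δ. -/
open Matrix

open Polynomial Finset in
lemma count_fiber (q : ℕ) (hq2 : 2 ≤ q) {F : Type} [Field F] [Fintype F]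
    (hF : Fintype.card F = q ^ 2) (t : F) (ht : t ≠ 0) (htq : t ^ q = t)
    (D : Finset F) (hD : D.card ≤ q) : ∃ z : F, z ^ (q + 1) = t ∧ z ∉ D := by
  classical
  suffices h : q + 1 ≤ (Finset.univ.filter (fun z : F => z ^ (q + 1) = t)).card by
    by_contra hcon
    push_neg at hcon
    have hss : (Finset.univ.filter (fun z : F => z ^ (q + 1) = t)) ⊆ D := by
      intro z hz
      simp only [Finset.mem_filter, Finset.mem_univ, true_and] at hz
      exact hcon z hz
    have := Finset.card_le_card hss
    omega
  have hpow : ∀ z : F, z ^ (q ^ 2) = z := fun z => by rw [← hF]; exact FiniteField.pow_card z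
  set S : Finset F := Finset.univ.filter (fun s : F => s ≠ 0 ∧ s ^ q = s) with hSdef
  have hScard : S.card ≤ q - 1 := by
    have hsub : S ⊆ (Polynomial.nthRoots (q - 1) (1 : F)).toFinset := by
      intro s hs
      simp only [hSdef, Finset.mem_filter, Finset.mem_univ, true_and] at hs
      rw [Multiset.mem_toFinset, Polynomial.mem_nthRoots (by omega)]
      have h1 : s ^ (q - 1) * s = 1 * s := by
        rw [← pow_succ, one_mul, Nat.sub_add_cancel (by omega)]; exact hs.2
      exact mul_right_cancel₀ hs.1 h1
    calc S.card ≤ _ := Finset.card_le_card hsub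
      _ ≤ Multiset.card (Polynomial.nthRoots (q - 1) (1 : F)) := (Polynomial.nthRoots _ _).toFinset_card_le
      _ ≤ q - 1 := Polynomial.card_nthRoots _ _
  set E : Finset F := Finset.univ.filter (fun z : F => z ≠ 0) with hEdef
  have hfib : ∀ s : F, (E.filter (fun z : F => z ^ (q + 1) = s)).card ≤ q + 1 := by
    intro s
    have hsub : E.filter (fun z : F => z ^ (q + 1) = s) ⊆
        (Polynomial.nthRoots (q + 1) s).toFinset := by
      intro z hz
      simp only [Finset.mem_filter] at hz
      rw [Multiset.mem_toFinset, Polynomial.mem_nthRoots (by omega)]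
      exact hz.2
    calc _ ≤ _ := Finset.card_le_card hsub
      _ ≤ Multiset.card (Polynomial.nthRoots (q + 1) s) := (Polynomial.nthRoots _ _).toFinset_card_le
      _ ≤ q + 1 := Polynomial.card_nthRoots _ _
  have htS : t ∈ S := by simp [hSdef, ht, htq]
  have hEcard : E.card = q ^ 2 - 1 := by
    have h0 : E = Finset.univ.erase 0 := by
      ext z; simp [hEdef, Finset.mem_erase]
    rw [h0, Finset.card_erase_of_mem (Finset.mem_univ 0), Finset.card_univ, hF]
  have hmap : ∀ z ∈ E, z ^ (q + 1) ∈ S := by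
    intro z hz
    simp only [hEdef, Finset.mem_filter, Finset.mem_univ, true_and] at hz
    simp only [hSdef, Finset.mem_filter, Finset.mem_univ, true_and]
    refine ⟨pow_ne_zero _ hz, ?_⟩
    rw [← pow_mul]
    have : (q + 1) * q = q ^ 2 + q := by ring
    rw [this, pow_add, hpow, pow_add, pow_one]
    exact mul_comm z _
  have hsum : E.card = ∑ s ∈ S, (E.filter (fun z => z ^ (q + 1) = s)).card :=
    Finset.card_eq_sum_card_fiberwise hmap
  have ht' : q + 1 ≤ (E.filter (fun z => z ^ (q + 1) = t)).card := by
    by_contra hcon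
    push_neg at hcon
    have hsplit : ∑ s ∈ S, (E.filter (fun z => z ^ (q + 1) = s)).card
        = (E.filter (fun z => z ^ (q + 1) = t)).card
          + ∑ s ∈ S.erase t, (E.filter (fun z => z ^ (q + 1) = s)).card :=
      (Finset.add_sum_erase _ _ htS).symm
    have hrest : ∑ s ∈ S.erase t, (E.filter (fun z => z ^ (q + 1) = s)).card
        ≤ (S.erase t).card * (q + 1) := by
      have := Finset.sum_le_card_nsmul (S.erase t)
        (fun s => (E.filter (fun z => z ^ (q + 1) = s)).card) (q + 1)
        (fun s _ => hfib s)
      simpa [smul_eq_mul] using this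
    have hec : (S.erase t).card ≤ q - 2 := by
      rw [Finset.card_erase_of_mem htS]; omega
    obtain ⟨m, rfl⟩ : ∃ m, q = m + 2 := ⟨q - 2, by omega⟩
    have h1 : (m + 2) ^ 2 - 1 ≤ (m + 2) + (m * ((m + 2) + 1)) := by
      have := hsum
      rw [hsplit] at this
      have h2 : (S.erase (t)).card * ((m+2) + 1) ≤ m * ((m+2)+1) := by
        apply Nat.mul_le_mul_right; omega
      omega
    have h2 : (m + 2) ^ 2 = m * m + 4 * m + 4 := by ring
    have h3 : m * (m + 2 + 1) = m * m + 3 * m := by ring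
    omega
  refine le_trans ht' (Finset.card_le_card ?_)
  intro z hz
  simp only [hEdef, Finset.mem_filter, Finset.mem_univ, true_and] at hz ⊢
  exact hz.2

/-- `U_δ` is a maximal partial spread set: there is no hermitian `2 × 2` matrix `A ∉ U_δ`
with `A - B` invertible for all `B ∈ U_δ`. -/
theorem stmt15 (q δ : ℕ) (hq : ∃ (p e : ℕ), p.Prime ∧ 0 < e ∧ q = p ^ e)
    (hδ1 : 1 ≤ δ) (hδq : δ ≤ q)
    (F : Type) [Field F] [Fintype F] (hF : Fintype.card F = q ^ 2)
    (Δ : Finset F) (hΔsub : ∀ x ∈ Δ, x ^ q = x) (hΔ0 : (0 : F) ∈ Δ) (hΔcard : Δ.card = δ)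
    (μ : F) (hμsub : μ ^ q = μ)
    (hμ : ∀ x y : F, x ^ q = x → y ^ q = y →
      x ^ 2 + y ^ 2 + (μ - 2) * x * y = 0 → x = 0 ∧ y = 0) :
    ¬ ∃ A : Matrix (Fin 2) (Fin 2) F, A = (A.map (fun x => x ^ q))ᵀ ∧
      A ∉ Udelta q Δ μ ∧ ∀ B ∈ Udelta q Δ μ, (A - B).det ≠ 0 := by
  classical
  obtain ⟨p, e, hp, he, hqpe⟩ := hq
  haveI hpfact : Fact p.Prime := ⟨hp⟩
  have hq2 : 2 ≤ q := by
    rw [hqpe]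
    calc 2 = 2 ^ 1 := rfl
      _ ≤ p ^ 1 := Nat.pow_le_pow_left hp.two_le 1
      _ ≤ p ^ e := Nat.pow_le_pow_right hp.one_lt.le he
  -- characteristic
  obtain ⟨p', hp'⟩ := CharP.exists F
  haveI := hp'
  obtain ⟨n, hp'prime, hcard⟩ := FiniteField.card F p'
  have hpp' : p' = p := by
    have hd : p' ∣ p ^ (e * 2) := by
      rw [pow_mul, ← hqpe, ← hF, hcard]
      exact dvd_pow_self p' n.ne_zero
    exact (Nat.prime_dvd_prime_iff_eq hp'prime hp).mp (hp'prime.dvd_of_dvd_pow hd)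
  subst hpp'
  have hfrob : ∀ x y : F, (x - y) ^ q = x ^ q - y ^ q := by
    intro x y; rw [hqpe]; exact sub_pow_char_pow x y e
  rintro ⟨A, hA, hAU, hdet⟩
  -- entries
  have hent : ∀ i j, A i j = (A j i) ^ q := by
    intro i j
    have := congrFun (congrFun hA i) j
    simpa [Matrix.transpose_apply, Matrix.map_apply] using this
  have h00 : (A 0 0) ^ q = A 0 0 := (hent 0 0).symm
  have h11 : (A 1 1) ^ q = A 1 1 := (hent 1 1).symm
  have h10 : A 1 0 = (A 0 1) ^ q := hent 1 0
  by_cases had : A 0 0 * A 1 1 = 0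
  · -- product zero
    by_cases hbΔ : A 0 1 ∈ Δ
    · have hbq : (A 0 1) ^ q = A 0 1 := hΔsub _ hbΔ
      by_cases hd0 : A 1 1 = 0
      · -- B = [[b,b],[b,0]]
        refine hdet !![A 0 1, A 0 1; A 0 1, 0] (Or.inl ⟨A 0 1, hbΔ, rfl⟩) ?_
        simp [Matrix.det_fin_two, Matrix.sub_apply, h10, hbq, hd0]
      · have ha0 : A 0 0 = 0 := by
          rcases mul_eq_zero.mp had with h | h
          · exact h
          · exact absurd h hd0
        refine hdet !![0, A 0 1; A 0 1, μ * A 0 1] (Or.inr (Or.inl ⟨A 0 1, hbΔ, rfl⟩)) ?_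
        simp [Matrix.det_fin_two, Matrix.sub_apply, h10, hbq, ha0]
    · -- B = [[0,b],[b^q,0]]
      refine hdet !![0, A 0 1; (A 0 1) ^ q, 0] (Or.inr (Or.inr ⟨A 0 1, hbΔ, rfl⟩)) ?_
      simp [Matrix.det_fin_two, Matrix.sub_apply, h10, had]
  · -- product nonzero: use the norm fiber
    have htq : (A 0 0 * A 1 1) ^ q = A 0 0 * A 1 1 := by rw [mul_pow, h00, h11]
    obtain ⟨z, hz, hzD⟩ := count_fiber q hq2 hF (A 0 0 * A 1 1) had htq
      (Δ.image (fun x => A 0 1 - x)) (le_trans Finset.card_image_le (hΔcard ▸ hδq))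
    set α := A 0 1 - z with hα
    have hαΔ : α ∉ Δ := by
      intro hmem
      exact hzD (Finset.mem_image.mpr ⟨α, hmem, by rw [hα]; ring⟩)
    refine hdet !![0, α; α ^ q, 0] (Or.inr (Or.inr ⟨α, hαΔ, rfl⟩)) ?_
    have hzval : A 0 1 - α = z := by rw [hα]; ring
    have key : (A 0 1 - α) * ((A 0 1) ^ q - α ^ q) = A 0 0 * A 1 1 := by
      rw [← hfrob, hzval, ← pow_succ']
      simpa [add_comm] using hz
    simp only [Matrix.det_fin_two, Matrix.sub_apply, h10]
    simp only [Matrix.cons_val', Matrix.cons_val_zero, Matrix.cons_val_one, Matrix.head_cons,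
      Matrix.head_fin_const, Matrix.empty_val', Matrix.cons_val_fin_one, Matrix.of_apply]
    rw [sub_zero, sub_zero]
    rw [key]; ring
end

section
/- If there exists a collection of N pairwise trivially-intersecting r-dimensional subspaces of F_{q^2}^n (a partial (r-1)-spread of PG(n-1,q^2) of size N), then there exists a set of N hermitian n×n matrices over F_{q^2} all of whose pairwise differences of distinct elements have rank exactly 2r and all of whose nonzero elements have rank 2r. -/
open Matrix

section AuxLemmas

variable {F : Type} [Field F]

/-- Applying a ring automorphism entrywise preserves linear independence of a
finite family of vectors. -/
lemma stmt18_li_map {n : ℕ} {ι : Type} [Fintype ι] (σ : F ≃+* F)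
    (v : ι → (Fin n → F)) (h : LinearIndependent F v) :
    LinearIndependent F (fun j => fun i => σ (v j i)) := by
  rw [Fintype.linearIndependent_iff] at h ⊢
  intro g hg j
  have h2 : ∑ k, (σ.symm (g k)) • v k = 0 := by
    funext i
    have h0 : (∑ k, g k • fun i => σ (v k i)) i = 0 := by rw [hg]; rfl
    simp only [Finset.sum_apply, Pi.smul_apply, smul_eq_mul] at h0
    have h1 := congrArg σ.symm h0
    rw [map_sum] at h1
    simp only [_root_.map_mul, RingEquiv.symm_apply_apply, _root_.map_zero] at h1
    simpa using h1
  have := h _ h2 j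
  have := congrArg σ this
  simpa using this

/-- Rank of `C * R` equals rank of `R` when `C` acts injectively. -/
lemma stmt18_rank_mul {l m k : Type} [Fintype m] [Fintype k]
    (C : Matrix l m F) (R : Matrix m k F) (h : Function.Injective C.mulVecLin) :
    (C * R).rank = R.rank := by
  rw [Matrix.rank, Matrix.rank, Matrix.mulVecLin_mul, LinearMap.range_comp]
  exact (LinearEquiv.finrank_eq
    (Submodule.equivMapOfInjective _ h (LinearMap.range R.mulVecLin))).symm

/-- A matrix with linearly independent columns has full column rank. -/
lemma stmt18_rank_of_li {l k : Type} [Fintype l] [Fintype k]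
    (M : Matrix l k F) (h : LinearIndependent F (fun j => Mᵀ j)) :
    M.rank = Fintype.card k := by
  have hinj : Function.Injective M.mulVecLin := Matrix.mulVec_injective_iff.mpr h
  rw [Matrix.rank, LinearMap.finrank_range_of_inj hinj,
    Module.finrank_fintype_fun_eq_card]

end AuxLemmas

/-- From a partial `(r-1)`-spread of `PG(n-1, q²)` of size `N` (a collection of `N`
pairwise trivially-intersecting `r`-dimensional subspaces of `F_{q^2}^n`) one obtains a
constant rank-distance `2r` set of `N` hermitian `n × n` matrices over `F_{q^2}`. -/
theorem stmt18 (n r N q : ℕ) (hq : ∃ (p e : ℕ), p.Prime ∧ 0 < e ∧ q = p ^ e)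
    (hr : 1 ≤ r)
    (F : Type) [Field F] [Fintype F] (hF : Fintype.card F = q ^ 2)
    (D : Finset (Submodule F (Fin n → F)))
    (hdim : ∀ S ∈ D, Module.finrank F ↥S = r)
    (hdisj : ∀ S ∈ D, ∀ T ∈ D, S ≠ T → S ⊓ T = ⊥)
    (hcard : D.card = N) :
    ∃ U : Finset (Matrix (Fin n) (Fin n) F),
      U.card = N ∧
      (∀ A ∈ U, A = (A.map (fun x => x ^ q))ᵀ) ∧
      (∀ A ∈ U, ∀ B ∈ U, A ≠ B → (A - B).rank = 2 * r) ∧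
      (∀ A ∈ U, A ≠ 0 → A.rank = 2 * r) := by
  classical
  obtain ⟨p, e, hp, he, rfl⟩ := hq
  haveI hfp : Fact p.Prime := ⟨hp⟩
  -- the characteristic of F is p
  haveI hchar : CharP F p := by
    obtain ⟨p', hp'⟩ := CharP.exists F
    haveI := hp'
    obtain ⟨m, hprime', hcard'⟩ := FiniteField.card F p'
    have hd : p' ∣ Fintype.card F := by
      rw [hcard']; exact dvd_pow_self p' m.pos.ne'
    rw [hF] at hd
    have hdp : p' ∣ p := hprime'.dvd_of_dvd_pow (hprime'.dvd_of_dvd_pow hd)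
    have : p' = p := (Nat.prime_dvd_prime_iff_eq hprime' hp).mp hdp
    exact this ▸ hp'
  -- Frobenius-type automorphism x ↦ x ^ (p ^ e)
  have hqq : ∀ x : F, (x ^ p ^ e) ^ p ^ e = x := by
    intro x
    rw [← pow_mul, ← sq, ← hF]
    exact FiniteField.pow_card x
  let σ : F ≃+* F :=
    { toFun := fun x => x ^ p ^ e
      invFun := fun x => x ^ p ^ e
      left_inv := hqq
      right_inv := hqq
      map_mul' := fun x y => mul_pow x y _
      map_add' := fun x y => add_pow_char_pow x y p e }
  have hσ : ∀ x : F, σ x = x ^ p ^ e := fun _ => rfl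
  rcases D.eq_empty_or_nonempty with hD | ⟨S₀, hS₀⟩
  · refine ⟨∅, ?_, by simp, by simp, by simp⟩
    simp [← hcard, hD]
  -- the main construction
  have hfd : ∀ S : Submodule F (Fin n → F), Module.Finite F S := fun S => inferInstance
  let bas : ∀ S : {S // S ∈ D}, Module.Basis (Fin r) F S.1 :=
    fun S => Module.finBasisOfFinrankEq F S.1 (hdim S.1 S.2)
  let col : {S // S ∈ D} → Fin r → (Fin n → F) := fun S j => (bas S j : Fin n → F)
  let X : {S // S ∈ D} → Matrix (Fin n) (Fin r) F := fun S => Matrix.of fun i j => col S j i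
  let A : {S // S ∈ D} → Matrix (Fin n) (Fin n) F := fun S => X S * ((X S).map σ)ᵀ
  have hli : ∀ S, LinearIndependent F (col S) := by
    intro S
    have := (bas S).linearIndependent
    exact this.map' S.1.subtype (Submodule.ker_subtype S.1)
  have hspan : ∀ S, Submodule.span F (Set.range (col S)) = S.1 := by
    intro S
    have : Set.range (col S) = S.1.subtype '' Set.range (bas S) := by
      rw [← Set.range_comp]; rfl
    rw [this, ← Submodule.map_span, (bas S).span_eq, Submodule.map_top,
      Submodule.range_subtype]
  -- key rank computation
  have key : ∀ S T : {S // S ∈ D}, S.1 ≠ T.1 → (A S - A T).rank = 2 * r := by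
    intro S T hST
    have hdisjST : Disjoint S.1 T.1 := disjoint_iff.mpr (hdisj S.1 S.2 T.1 T.2 hST)
    have hsum : LinearIndependent F (Sum.elim (col S) (col T)) :=
      (hli S).sum_type (hli T) (by rw [hspan S, hspan T]; exact hdisjST)
    set C : Matrix (Fin n) (Fin r ⊕ Fin r) F := fromCols (X S) (X T) with hC
    set Rm : Matrix (Fin r ⊕ Fin r) (Fin n) F :=
      fromRows ((X S).map σ)ᵀ (-(((X T).map σ)ᵀ)) with hRm
    have hprod : A S - A T = C * Rm := by
      rw [hC, hRm, fromCols_mul_fromRows, Matrix.mul_neg, ← sub_eq_add_neg]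
    have hCinj : Function.Injective C.mulVecLin := by
      apply Matrix.mulVec_injective_iff.mpr
      have hcols : (fun j => Cᵀ j) = Sum.elim (col S) (col T) := by
        funext j; cases j <;> rfl
      show LinearIndependent F (fun j => Cᵀ j)
      rw [hcols]; exact hsum
    have hRcols : (fun j => (Rmᵀ)ᵀ j) = ((Sum.elim (fun _ => (1 : Fˣ)) (fun _ => (-1 : Fˣ)) : Fin r ⊕ Fin r → Fˣ) •
        Sum.elim (fun j i => σ (col S j i)) (fun j i => σ (col T j i))) := by
      funext j
      cases j with
      | inl j => funext i; simp [hRm, Pi.smul_apply']; rfl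
      | inr j => funext i; simp [hRm, Pi.smul_apply']; rfl
    have hσli : LinearIndependent F (fun j => (Rmᵀ)ᵀ j) := by
      rw [hRcols]
      have base : LinearIndependent F
          (fun j => fun i => σ (Sum.elim (col S) (col T) j i)) :=
        stmt18_li_map σ _ hsum
      have base' : LinearIndependent F
          (Sum.elim (fun j i => σ (col S j i)) (fun j i => σ (col T j i))) := by
        have : (fun j => fun i => σ (Sum.elim (col S) (col T) j i)) =
            Sum.elim (fun j i => σ (col S j i)) (fun j i => σ (col T j i)) := by
          funext j; cases j <;> rfl
        rwa [this] at base
      exact base'.units_smul _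
    have hrank : Rmᵀ.rank = 2 * r := by
      rw [stmt18_rank_of_li Rmᵀ hσli]
      simp [two_mul]
    rw [hprod, stmt18_rank_mul C Rm hCinj, ← Matrix.rank_transpose, hrank]
  -- hermitian property of each A S
  have hherm : ∀ S : {S // S ∈ D}, A S = ((A S).map fun x => x ^ p ^ e)ᵀ := by
    intro S
    ext i j
    show (A S) i j = σ ((A S) j i)
    simp only [A, Matrix.mul_apply, Matrix.transpose_apply, Matrix.map_apply]
    rw [map_sum]
    refine Finset.sum_congr rfl fun k _ => ?_
    rw [_root_.map_mul]
    show X S i k * σ (X S j k) = σ (X S j k) * σ (σ (X S i k))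
    rw [show σ (σ (X S i k)) = X S i k from hqq _, mul_comm]
  -- the set U
  let T₀ : {S // S ∈ D} := ⟨S₀, hS₀⟩
  let f : {S // S ∈ D} → Matrix (Fin n) (Fin n) F := fun S => A S - A T₀
  have hfinj : Function.Injective f := by
    intro S T h
    have hAB : A S = A T := by
      have := sub_left_injective h
      exact this
    by_contra hne
    have hST : S.1 ≠ T.1 := fun hh => hne (Subtype.ext hh)
    have := key S T hST
    rw [hAB, sub_self, Matrix.rank_zero] at this
    omega
  refine ⟨D.attach.image f, ?_, ?_, ?_, ?_⟩
  · rw [Finset.card_image_of_injective _ hfinj, Finset.card_attach, hcard]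
  · intro M hM
    obtain ⟨S, -, rfl⟩ := Finset.mem_image.mp hM
    show A S - A T₀ = ((A S - A T₀).map fun x => x ^ p ^ e)ᵀ
    have hmapsub : ((A S - A T₀).map fun x => x ^ p ^ e) =
        ((A S).map fun x => x ^ p ^ e) - ((A T₀).map fun x => x ^ p ^ e) := by
      ext i j
      simp only [Matrix.map_apply, Matrix.sub_apply]
      exact map_sub σ _ _
    rw [hmapsub, Matrix.transpose_sub, ← hherm S, ← hherm T₀]
  · intro M hM M' hM' hne
    obtain ⟨S, -, rfl⟩ := Finset.mem_image.mp hM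
    obtain ⟨T, -, rfl⟩ := Finset.mem_image.mp hM'
    have hST : S.1 ≠ T.1 := by
      intro hh
      exact hne (congrArg f (Subtype.ext hh))
    have : f S - f T = A S - A T := sub_sub_sub_cancel_right _ _ _
    rw [this]
    exact key S T hST
  · intro M hM hne
    obtain ⟨S, -, rfl⟩ := Finset.mem_image.mp hM
    have hST : S.1 ≠ T₀.1 := by
      intro hh
      apply hne
      have : S = T₀ := Subtype.ext hh
      rw [show f S = A S - A T₀ from rfl, this, sub_self]
    exact key S T₀ hST
end

section
/- For every n ≥ 2 and prime power q, there exists a set of (q^{2n}-1)/(q^2-1) hermitian n×n matrices over F_{q^2} such that every difference of two distinct elements has rank exactly 2. -/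
open Matrix
open scoped LinearAlgebra.Projectivization

section Aux

variable {F : Type} [Field F] [Fintype F]

open Projectivization

/-- Counting lemma: the number of points of projective space over a finite field. -/
lemma aux_card_proj (n : ℕ) :
    Nat.card (ℙ F (Fin n → F)) * (Fintype.card F - 1) = Fintype.card F ^ n - 1 := by
  classical
  have e1 : Nat.card {v : Fin n → F // v ≠ 0} = Fintype.card F ^ n - 1 := by
    rw [Nat.card_eq_fintype_card]
    have h := Fintype.card_subtype_compl (fun v : Fin n → F => v = 0)
    rw [Fintype.card_subtype_eq] at h
    rw [h, Fintype.card_fun, Fintype.card_fin]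
  let f : {v : Fin n → F // v ≠ 0} → ℙ F (Fin n → F) := fun v => mk F v.1 v.2
  have e2 := Nat.card_congr (Equiv.sigmaFiberEquiv f)
  have hfib : ∀ P : ℙ F (Fin n → F), Nat.card {v : {v : Fin n → F // v ≠ 0} // f v = P}
      = Fintype.card F - 1 := by
    intro P
    induction' P using Projectivization.ind with x hx
    rw [← Fintype.card_units (α := F), ← Nat.card_eq_fintype_card]
    apply Eq.symm
    apply Nat.card_eq_of_bijective
      (f := fun a : Fˣ => (⟨⟨(a : F) • x, smul_ne_zero a.ne_zero hx⟩,
        (mk_eq_mk_iff' F _ _ _ hx).2 ⟨(a : F), rfl⟩⟩ :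
        {v : {v : Fin n → F // v ≠ 0} // f v = mk F x hx}))
    constructor
    · intro a b hab
      have : (a : F) • x = (b : F) • x := congrArg (fun z => z.1.1) hab
      exact Units.ext (smul_left_injective F hx this)
    · rintro ⟨⟨v, hv⟩, hfv⟩
      obtain ⟨a, ha⟩ := (mk_eq_mk_iff F v x hv hx).1 hfv
      exact ⟨a, by apply Subtype.ext; apply Subtype.ext; simpa [Units.smul_def] using ha⟩
  haveI : Finite (ℙ F (Fin n → F)) := Quotient.finite _
  haveI : Fintype (ℙ F (Fin n → F)) := Fintype.ofFinite _
  rw [← e1, ← e2]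
  simp only [Nat.card_eq_fintype_card, Fintype.card_sigma]
  have : ∀ P : ℙ F (Fin n → F),
      Fintype.card {v : {v : Fin n → F // v ≠ 0} // f v = P} = Fintype.card F - 1 := by
    intro P; rw [← Nat.card_eq_fintype_card]; exact hfib P
  simp [this, Finset.sum_const, Nat.card_eq_fintype_card, mul_comm]

/-- Rank lemma: a matrix of the form `x uᵀ - y vᵀ` with `x, y` and `u, v` each linearly
independent has rank exactly 2. -/
lemma aux_rank_two {n : ℕ} (x y u v : Fin n → F)
    (hxy : LinearIndependent F ![x, y]) (huv : LinearIndependent F ![u, v]) :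
    (Matrix.of fun i j => x i * u j - y i * v j).rank = 2 := by
  classical
  set X : Matrix (Fin n) (Fin 2) F := (Matrix.of ![x, y])ᵀ with hX
  set Y : Matrix (Fin 2) (Fin n) F := Matrix.of ![u, -v] with hYdef
  have hM : (Matrix.of fun i j => x i * u j - y i * v j) = X * Y := by
    ext i j
    rw [Matrix.mul_apply, Fin.sum_univ_two]
    show x i * u j - y i * v j = x i * u j + y i * (-v) j
    simp [sub_eq_add_neg]
  have hY : LinearIndependent F ![u, -v] := by
    rw [LinearIndependent.pair_iff] at huv ⊢
    intro s t hst
    have := huv s (-t) (by rw [neg_smul, ← smul_neg]; exact hst)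
    exact ⟨this.1, by simpa using this.2⟩
  have hYrank : Y.rank = 2 := by
    have := (show LinearIndependent F Y from hY).rank_matrix
    simpa using this
  have hYsurj : LinearMap.range Y.mulVecLin = ⊤ := by
    apply Submodule.eq_top_of_finrank_eq
    have : Module.finrank F (LinearMap.range Y.mulVecLin) = Y.rank := rfl
    rw [this, hYrank, Module.finrank_pi, Fintype.card_fin]
  have hXrank : X.rank = 2 := by
    rw [hX, Matrix.rank_transpose]
    have := (show LinearIndependent F (Matrix.of ![x, y]) from hxy).rank_matrix
    simpa using this
  rw [hM]
  show Module.finrank F (LinearMap.range (X * Y).mulVecLin) = 2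
  rw [Matrix.mulVecLin_mul, LinearMap.range_comp_of_range_eq_top _ hYsurj]
  exact hXrank

end Aux

/-- For every `n ≥ 2` and prime power `q` there exists a constant rank-distance `2` set of
hermitian `n × n` matrices over `F_{q^2}` of size `(q^{2n} - 1)/(q² - 1)`. -/
theorem stmt19 (n q : ℕ) (hq : ∃ (p e : ℕ), p.Prime ∧ 0 < e ∧ q = p ^ e)
    (hn : 2 ≤ n)
    (F : Type) [Field F] [Fintype F] (hF : Fintype.card F = q ^ 2) :
    ∃ U : Finset (Matrix (Fin n) (Fin n) F),
      U.card = (q ^ (2 * n) - 1) / (q ^ 2 - 1) ∧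
      (∀ A ∈ U, A = (A.map (fun x => x ^ q))ᵀ) ∧
      (∀ A ∈ U, ∀ B ∈ U, A ≠ B → (A - B).rank = 2) := by
  classical
  obtain ⟨p, e, hp, he, rfl⟩ := hq
  haveI : Fact p.Prime := ⟨hp⟩
  set q := p ^ e with hqdef
  have hq2 : 2 ≤ q := hp.two_le.trans (Nat.le_self_pow he.ne' p)
  have hq0 : q ≠ 0 := by omega
  -- characteristic
  haveI : CharP F (ringChar F) := ringChar.charP F
  obtain ⟨n', hp', hcard'⟩ := FiniteField.card F (ringChar F)
  have hpr : p = ringChar F := by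
    have h1 : p ∣ (ringChar F) ^ (n' : ℕ) := by
      rw [← hcard', hF, hqdef, ← pow_mul]
      exact dvd_pow_self p (by positivity)
    exact (Nat.prime_dvd_prime_iff_eq hp hp').1 (hp.dvd_of_dvd_pow h1)
  haveI : CharP F p := hpr ▸ ringChar.charP F
  -- the conjugation map
  set c : F → F := fun a => a ^ q with hc
  have hc0 : c 0 = 0 := zero_pow hq0
  have hcadd : ∀ a b : F, c (a + b) = c a + c b := fun a b => add_pow_char_pow ..
  have hcmul : ∀ a b : F, c (a * b) = c a * c b := fun a b => mul_pow a b q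
  have hcinv : ∀ a : F, c (c a) = a := by
    intro a
    show (a ^ q) ^ q = a
    rw [← pow_mul, ← sq, ← hF]
    exact FiniteField.pow_card a
  -- conjugation preserves linear independence of pairs
  have hcli : ∀ x y : Fin n → F, LinearIndependent F ![x, y] →
      LinearIndependent F ![c ∘ x, c ∘ y] := by
    intro x y hxy
    rw [LinearIndependent.pair_iff] at hxy ⊢
    intro s t hst
    have hpt : ∀ i, c s * x i + c t * y i = 0 := by
      intro i
      have h1 : s * c (x i) + t * c (y i) = 0 := congrFun hst i
      have h2 := congrArg c h1
      rw [hcadd, hcmul, hcmul, hcinv, hcinv, hc0] at h2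
      exact h2
    have := hxy (c s) (c t) (by funext i; simpa [Pi.add_apply] using hpt i)
    constructor
    · have := congrArg c this.1; rwa [hcinv, hc0] at this
    · have := congrArg c this.2; rwa [hcinv, hc0] at this
  -- the construction
  haveI : Finite (ℙ F (Fin n → F)) := Quotient.finite _
  haveI : Fintype (ℙ F (Fin n → F)) := Fintype.ofFinite _
  set g : ℙ F (Fin n → F) → Matrix (Fin n) (Fin n) F :=
    fun P => Matrix.of fun i j => P.rep i * c (P.rep j) with hg
  -- linear independence of representatives of distinct points
  have hrep : ∀ P Q : ℙ F (Fin n → F), P ≠ Q → LinearIndependent F ![P.rep, Q.rep] := by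
    intro P Q hPQ
    have h1 := (Projectivization.independent_pair_iff_ne P Q).2 hPQ
    have h2 := (Projectivization.independent_iff).1 h1
    have h3 : Projectivization.rep ∘ ![P, Q] = ![P.rep, Q.rep] := by
      funext i; fin_cases i <;> rfl
    rwa [h3] at h2
  -- rank of differences
  have hdiff : ∀ P Q : ℙ F (Fin n → F), P ≠ Q → (g P - g Q).rank = 2 := by
    intro P Q hPQ
    have hxy := hrep P Q hPQ
    have huv := hcli _ _ hxy
    have : g P - g Q =
        Matrix.of fun i j => P.rep i * (c ∘ P.rep) j - Q.rep i * (c ∘ Q.rep) j := by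
      ext i j; simp [hg]
    rw [this]
    exact aux_rank_two _ _ _ _ hxy huv
  -- injectivity
  have hinj : Function.Injective g := by
    intro P Q hPQ
    by_contra hne
    have := hdiff P Q hne
    rw [hPQ, sub_self, Matrix.rank_zero] at this
    omega
  refine ⟨Finset.image g Finset.univ, ?_, ?_, ?_⟩
  · rw [Finset.card_image_of_injective _ hinj, Finset.card_univ]
    have hcount := aux_card_proj (F := F) n
    rw [Nat.card_eq_fintype_card] at hcount
    have hQpos : 0 < Fintype.card F - 1 := by
      rw [hF, pow_two]
      have := Nat.mul_le_mul hq2 hq2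
      omega
    have h1 : q ^ (2 * n) - 1 = Fintype.card F ^ n - 1 := by rw [hF, pow_mul]
    have h2 : q ^ 2 - 1 = Fintype.card F - 1 := by rw [hF]
    rw [h1, h2]
    exact (Nat.div_eq_of_eq_mul_left hQpos hcount.symm).symm
  · intro A hA
    obtain ⟨P, _, rfl⟩ := Finset.mem_image.1 hA
    ext i j
    show P.rep i * c (P.rep j) = c (P.rep j * c (P.rep i))
    rw [hcmul, hcinv, mul_comm]
  · intro A hA B hB hAB
    obtain ⟨P, _, rfl⟩ := Finset.mem_image.1 hA
    obtain ⟨Q, _, rfl⟩ := Finset.mem_image.1 hB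
    exact hdiff P Q (fun h => hAB (congrArg g h))
end
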